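/- arXiv:1211.2864 — 4 statements merged into one kernel-verified Lean document; each statement's English description precedes it below -/
import Mathlib

section
/- For every integer a, the cardinality of S_a is equal to 0, to 2^s − 1, or to 2(2^s − 1). -/
noncomputable section

open scoped BigOperators

/-- `M = 2^{2s} + 2^s + 1`. -/
abbrev Mof (s : ℕ) : ℕ := 2 ^ (2 * s) + 2 ^ s + 1

/-- The relative trace from `F` (of order `2^{3s}`) to its subfield `E` of order `2^s`:
`Tr_{F/E}(x) = x + x^{2^s} + x^{2^{2s}}`, viewed as a map `F → F`. -/
def trFE {F : Type*} [Field F] (s : ℕ) (x : F) : F :=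
  x + x ^ (2 ^ s) + x ^ (2 ^ (2 * s))

/-- `ψ(x) = 1` if the absolute trace `Tr_{F/𝔽₂}(x) = 0`, and `-1` otherwise. -/
def psi (F : Type*) [Field F] [Algebra (ZMod 2) F] (x : F) : ℤ :=
  if Algebra.trace (ZMod 2) F x = 0 then 1 else -1

/-- `ψ(cS) = ∑_{x ∈ S} ψ(c·x)`. -/
def psiSum (F : Type*) [Field F] [Algebra (ZMod 2) F] (c : F) (S : Set F) : ℤ :=
  ∑ᶠ x ∈ S, psi F (c * x)

/-- `D = {u ∈ F^× : Tr_{F/E}(u⁻¹) = 0}`. -/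
def Dset (F : Type*) [Field F] (s : ℕ) : Set F :=
  {u | u ≠ 0 ∧ trFE s u⁻¹ = 0}

/-- `S_a = {u ∈ F^× : Tr_{F/E}(u^{2^s+1}) = 0 ∧ Tr_{F/E}(ω^a u) = 0}`. -/
def Sa {F : Type*} [Field F] (s : ℕ) (ω : F) (a : ℤ) : Set F :=
  {u | u ≠ 0 ∧ trFE s (u ^ (2 ^ s + 1)) = 0 ∧ trFE s (ω ^ a * u) = 0}

/-- `T₁ ⊆ ℤ/Mℤ`: classes `a` with `|S_a| = 2^s - 1`. -/
def T1 {F : Type*} [Field F] (s : ℕ) (ω : F) : Set (ZMod (Mof s)) :=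
  {x | (Sa s ω (x.val : ℤ)).ncard = 2 ^ s - 1}

/-- `T₂ ⊆ ℤ/Mℤ`: classes `a` with `|S_a| = 2(2^s - 1)`. -/
def T2 {F : Type*} [Field F] (s : ℕ) (ω : F) : Set (ZMod (Mof s)) :=
  {x | (Sa s ω (x.val : ℤ)).ncard = 2 * (2 ^ s - 1)}

/-- `T₃ ⊆ ℤ/Mℤ`: classes `a` with `|S_a| = 0`. -/
def T3 {F : Type*} [Field F] (s : ℕ) (ω : F) : Set (ZMod (Mof s)) :=
  {x | (Sa s ω (x.val : ℤ)).ncard = 0}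

/-- The cyclotomic class `C_i^{(M,K)} = {g^{i+Mt} : t ∈ ℤ}`. -/
def cyc {K : Type*} [Field K] (M : ℕ) (g : K) (i : ℤ) : Set K :=
  {x | ∃ t : ℤ, x = g ^ (i + (M : ℤ) * t)}

/-- `⋃_{i ∈ T} C_i^{(M,K)}` for a set `T ⊆ ℤ/Mℤ` of indices. -/
def Rclass {K : Type*} [Field K] (s : ℕ) (g : K) (T : Set (ZMod (Mof s))) : Set K :=
  ⋃ i ∈ T, cyc (Mof s) g ((i.val : ℤ))

/-- The family `R_0 = {0}`, `R_k = ⋃_{i ∈ T_k} C_i^{(M,K)}`, `k = 1, 2, 3`. -/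
def Rfam {F K : Type*} [Field F] [Field K] (s : ℕ) (ω : F) (g : K) : Fin 4 → Set K :=
  ![{0}, Rclass s g (T1 s ω), Rclass s g (T2 s ω), Rclass s g (T3 s ω)]

/-- Indicator `[P] = 1` if `P` holds, `0` otherwise. -/
def Ind (P : Prop) : ℤ := @ite ℤ P (Classical.propDecidable P) 1 0


/-!
Write `q = 2^s`, `Tr = trFE s`, `c = ω^a` and `H = {x | Tr (c x) = 0}`. Over the subfield `E` of
elements fixed by `x ↦ x^q`, `F` is a 3-dimensional space, `H` is a plane and
`Q u = Tr (u^(q+1))` is a quadratic form whose polar form is `B x y = Tr x Tr y + Tr (x y)`.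
`S_a` is the set of nonzero zeros of `Q` on `H`, a union of punctured `E`-lines. If it contains
two independent vectors `u, v`, these span `H`, and `Q (l u + m v) = l m B u v` shows that a third
line forces `B u v = 0`, i.e. `Q` vanishes on all of `H`. That is impossible: `B x y = Tr ((Tr x + x) y)`
would vanish for `x, y ∈ H`, so `Tr u + u` and `Tr v + v` lie in `E c`, and a suitable
`E`-combination `w ≠ 0` of `u, v` in `H` satisfies `Tr w = w`, i.e. `w ∈ E`; then `1 ∈ H`,
but `Q 1 = 1`. Hence `S_a` is empty, one punctured line or two.
-/

/-- The polar form of the quadratic form `u ↦ trFE s (u ^ (2 ^ s + 1))`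
(see `trFE_pow_add_one_add`). -/
def trFEPolar {F : Type*} [Field F] (s : ℕ) (x y : F) : F :=
  trFE s x * trFE s y + trFE s (x * y)

theorem ncard_le_natDegree_of_forall_eval_eq_zero {K : Type*} [Field K] {p : Polynomial K}
    (hp : p ≠ 0) {S : Set K} (hS : ∀ x ∈ S, p.eval x = 0) : S.ncard ≤ p.natDegree :=
  (Set.ncard_le_ncard (fun x hx ↦ (Polynomial.mem_rootSet.2 ⟨hp, by simpa using hS x hx⟩))
    (p.rootSet_finite K)).trans (p.ncard_rootSet_le K)

section Field

variable {F : Type*} [Field F] {s : ℕ}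

theorem trFE_eq (x : F) : trFE s x = x + x ^ 2 ^ s + (x ^ 2 ^ s) ^ 2 ^ s := by
  rw [trFE, ← pow_mul, ← pow_add, two_mul]

theorem trFEPolar_comm (x y : F) : trFEPolar s x y = trFEPolar s y x := by
  rw [trFEPolar, trFEPolar, mul_comm, mul_comm x]

open Polynomial in
theorem ncard_setOf_trFE_mul_eq_zero_le (hs : 1 ≤ s) {c : F} (hc : c ≠ 0) :
    {x | trFE s (c * x) = 0}.ncard ≤ 2 ^ s * 2 ^ s := by
  have hdeg : (C c * X + C (c ^ 2 ^ s) * X ^ 2 ^ s +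
      C ((c ^ 2 ^ s) ^ 2 ^ s) * X ^ (2 ^ s * 2 ^ s)).natDegree = 2 ^ s * 2 ^ s := by
    have : 1 < 2 ^ s := Nat.one_lt_two_pow (by omega)
    have : 2 ^ s ≤ 2 ^ s * 2 ^ s := Nat.le_mul_self _
    compute_degree!
    · simp [show s ≠ 0 by omega, hc]
    all_goals omega
  refine hdeg ▸ ncard_le_natDegree_of_forall_eval_eq_zero ?_ fun x hx ↦ ?_
  · exact ne_zero_of_natDegree_gt (n := 0) (by rw [hdeg]; positivity)
  · simpa [trFE_eq, mul_pow, pow_mul] using hx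

variable [Fintype F]

theorem pow_two_pow_pow_two_pow_pow_two_pow (hF : Fintype.card F = 2 ^ (3 * s)) (x : F) :
    ((x ^ 2 ^ s) ^ 2 ^ s) ^ 2 ^ s = x := by
  rw [← pow_mul, ← pow_mul, ← pow_add, ← pow_add, (by omega : s + (s + s) = 3 * s), ← hF,
    FiniteField.pow_card]

theorem trFE_pow (hF : Fintype.card F = 2 ^ (3 * s)) (x : F) :
    trFE s (x ^ 2 ^ s) = trFE s x := by
  rw [trFE_eq, trFE_eq, pow_two_pow_pow_two_pow_pow_two_pow hF]
  ring

theorem trFE_mul_pow_two_pow (hF : Fintype.card F = 2 ^ (3 * s)) (x y : F) :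
    trFE s (x * y ^ 2 ^ s) = trFE s ((x ^ 2 ^ s) ^ 2 ^ s * y) := by
  rw [← trFE_pow hF ((x ^ 2 ^ s) ^ 2 ^ s * y), mul_pow, pow_two_pow_pow_two_pow_pow_two_pow hF]

theorem eq_zero_of_forall_trFE_mul_eq_zero (hF : Fintype.card F = 2 ^ (3 * s)) (hs : 1 ≤ s)
    {g : F} (hg : ∀ t, trFE s (g * t) = 0) : g = 0 := by
  by_contra hg0
  have hle := ncard_setOf_trFE_mul_eq_zero_le hs hg0
  rw [show {t | trFE s (g * t) = 0} = Set.univ from Set.eq_univ_of_forall hg, Set.ncard_univ,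
    Nat.card_eq_fintype_card, hF] at hle
  have : 2 ^ s * 2 ^ s < 2 ^ (3 * s) := by
    rw [← pow_add]
    exact Nat.pow_lt_pow_right (by norm_num) (by omega)
  omega

end Field

section CharTwo

variable {F : Type*} [Field F] [CharP F 2] {s : ℕ}

variable (F) in
def subfieldE (s : ℕ) : Subfield F :=
  (iterateFrobenius F 2 s).eqLocusField (RingHom.id F)

def puncturedLine (s : ℕ) (u : F) : Set F := (· * u) '' ((subfieldE F s : Set F) \ {0})

theorem mem_subfieldE {x : F} : x ∈ subfieldE F s ↔ x ^ 2 ^ s = x := by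
  rw [subfieldE, RingHom.mem_eqLocusField, iterateFrobenius_def, RingHom.id_apply]

theorem trFE_add (x y : F) : trFE s (x + y) = trFE s x + trFE s y := by
  simp only [trFE_eq, add_pow_char_pow]
  ring

theorem trFE_mul_of_mem {l : F} (hl : l ∈ subfieldE F s) (x : F) :
    trFE s (l * x) = l * trFE s x := by
  rw [mem_subfieldE] at hl
  simp only [trFE_eq, mul_pow, hl]
  ring

theorem trFE_of_mem {l : F} (hl : l ∈ subfieldE F s) : trFE s l = l := by
  rw [trFE_eq, mem_subfieldE.mp hl, mem_subfieldE.mp hl, CharTwo.add_self_eq_zero, zero_add]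

theorem trFE_mul_pow_add_one {l : F} (hl : l ∈ subfieldE F s) (x : F) :
    trFE s ((l * x) ^ (2 ^ s + 1)) = l ^ 2 * trFE s (x ^ (2 ^ s + 1)) := by
  rw [mul_pow, pow_succ l, mem_subfieldE.mp hl, ← sq, trFE_mul_of_mem (pow_mem hl 2)]

theorem trFE_sq (x : F) : trFE s (x ^ 2) = trFE s x ^ 2 := by
  simp only [trFE_eq, CharTwo.add_sq]
  ring

theorem trFEPolar_self (x : F) : trFEPolar s x x = 0 := by
  rw [trFEPolar, ← sq, ← trFE_sq, sq, CharTwo.add_self_eq_zero]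

theorem trFEPolar_add_right (x y z : F) :
    trFEPolar s x (y + z) = trFEPolar s x y + trFEPolar s x z := by
  simp only [trFEPolar, mul_add, trFE_add]
  ring

theorem trFEPolar_mul_right {l : F} (hl : l ∈ subfieldE F s) (x y : F) :
    trFEPolar s x (l * y) = l * trFEPolar s x y := by
  simp only [trFEPolar, mul_left_comm x, trFE_mul_of_mem hl]
  ring

theorem ncard_subfieldE_le (hs : 1 ≤ s) : (subfieldE F s : Set F).ncard ≤ 2 ^ s := by
  have hdeg : (Polynomial.X ^ 2 ^ s - Polynomial.X : Polynomial F).natDegree = 2 ^ s := by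
    have : 1 < 2 ^ s := Nat.one_lt_two_pow (by omega)
    rw [Polynomial.natDegree_sub_eq_left_of_natDegree_lt] <;> simp [this]
  refine hdeg ▸ ncard_le_natDegree_of_forall_eval_eq_zero ?_ fun x hx ↦ ?_
  · exact Polynomial.ne_zero_of_natDegree_gt (n := 0) (by rw [hdeg]; positivity)
  · simp [mem_subfieldE.mp hx]

theorem disjoint_puncturedLine {u v : F} (huv : ∀ l ∈ subfieldE F s, v ≠ l * u) :
    Disjoint (puncturedLine s u) (puncturedLine s v) := by
  rw [Set.disjoint_left]
  rintro _ ⟨l, ⟨hl, -⟩, rfl⟩ ⟨m, ⟨hm, hm0⟩, hmv⟩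
  refine huv (l / m) (div_mem hl hm) ?_
  rw [div_mul_eq_mul_div, eq_div_iff hm0, mul_comm]
  exact hmv

theorem puncturedLine_subset_Sa {ω u : F} {a : ℤ} (hu : u ∈ Sa s ω a) :
    puncturedLine s u ⊆ Sa s ω a := by
  rintro _ ⟨l, ⟨hl, hl0⟩, rfl⟩
  obtain ⟨hu0, hQu, hHu⟩ := hu
  refine ⟨mul_ne_zero hl0 hu0, ?_, ?_⟩
  · rw [trFE_mul_pow_add_one hl, hQu, mul_zero]
  · rw [mul_left_comm, trFE_mul_of_mem hl, hHu, mul_zero]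

variable [Fintype F]

theorem trFE_mem (hF : Fintype.card F = 2 ^ (3 * s)) (x : F) : trFE s x ∈ subfieldE F s := by
  have hfrob : trFE s x ^ 2 ^ s = trFE s (x ^ 2 ^ s) := by simp only [trFE_eq, add_pow_char_pow]
  rw [mem_subfieldE, hfrob, trFE_pow hF]

theorem trFEPolar_eq (hF : Fintype.card F = 2 ^ (3 * s)) (x y : F) :
    trFEPolar s x y = trFE s ((trFE s x + x) * y) := by
  rw [add_mul, trFE_add, trFE_mul_of_mem (trFE_mem hF x), trFEPolar]

theorem trFE_pow_add_one_add (hF : Fintype.card F = 2 ^ (3 * s)) (x y : F) :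
    trFE s ((x + y) ^ (2 ^ s + 1)) =
      trFE s (x ^ (2 ^ s + 1)) + trFE s (y ^ (2 ^ s + 1)) + trFEPolar s x y := by
  have hcross : trFE s (x ^ 2 ^ s * y) + trFE s (x * y ^ 2 ^ s) = trFEPolar s x y := by
    have hx : x ^ 2 ^ s + (x ^ 2 ^ s) ^ 2 ^ s = trFE s x + x := by
      rw [trFE_eq]
      linear_combination -CharTwo.add_self_eq_zero x
    rw [trFE_mul_pow_two_pow hF, ← trFE_add, ← add_mul, hx, trFEPolar_eq hF]
  rw [← hcross, pow_succ, pow_succ, pow_succ, add_pow_char_pow]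
  simp only [add_mul, mul_add, trFE_add, mul_comm (y ^ 2 ^ s) x]
  ring

theorem trFE_smul_add_smul_pow_add_one (hF : Fintype.card F = 2 ^ (3 * s)) {l m : F}
    (hl : l ∈ subfieldE F s) (hm : m ∈ subfieldE F s) (u v : F) :
    trFE s ((l * u + m * v) ^ (2 ^ s + 1)) = l ^ 2 * trFE s (u ^ (2 ^ s + 1)) +
      m ^ 2 * trFE s (v ^ (2 ^ s + 1)) + l * m * trFEPolar s u v := by
  rw [trFE_pow_add_one_add hF, trFE_mul_pow_add_one hl, trFE_mul_pow_add_one hm,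
    trFEPolar_mul_right hm, trFEPolar_comm, trFEPolar_mul_right hl, trFEPolar_comm,
    mul_left_comm, mul_assoc]

theorem ncard_subfieldE (hF : Fintype.card F = 2 ^ (3 * s)) (hs : 1 ≤ s) :
    (subfieldE F s : Set F).ncard = 2 ^ s := by
  refine (ncard_subfieldE_le hs).antisymm ?_
  let φ : F →+ F := (iterateFrobenius F 2 s).toAddMonoidHom - AddMonoidHom.id F
  have hker : (φ.ker : Set F) = subfieldE F s := by
    ext x
    simp [φ, sub_eq_zero, mem_subfieldE, iterateFrobenius_def]
  have hrange : (φ.range : Set F) ⊆ {x | trFE s (1 * x) = 0} := by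
    rintro _ ⟨x, rfl⟩
    simp [φ, iterateFrobenius_def, CharTwo.sub_eq_add, trFE_add, trFE_pow hF,
      CharTwo.add_self_eq_zero]
  have hcard : Nat.card φ.ker * Nat.card φ.range = 2 ^ s * (2 ^ s * 2 ^ s) := by
    rw [← AddSubgroup.index_ker, AddSubgroup.card_mul_index, Nat.card_eq_fintype_card, hF,
      ← pow_add, ← pow_add]
    ring_nf
  rw [← SetLike.coe_sort_coe, ← SetLike.coe_sort_coe φ.range, Nat.card_coe_set_eq,
    Nat.card_coe_set_eq, hker] at hcard
  have hrange_le :=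
    (Set.ncard_le_ncard hrange).trans (ncard_setOf_trFE_mul_eq_zero_le hs one_ne_zero)
  refine Nat.le_of_mul_le_mul_right ?_ (by positivity : 0 < 2 ^ s * 2 ^ s)
  calc 2 ^ s * (2 ^ s * 2 ^ s) = _ := hcard.symm
    _ ≤ _ := Nat.mul_le_mul_left _ hrange_le

theorem exists_mem_subfieldE_eq_mul (hF : Fintype.card F = 2 ^ (3 * s)) (hs : 1 ≤ s) {c d : F}
    (hc : c ≠ 0) (hcd : ∀ y, trFE s (c * y) = 0 → trFE s (d * y) = 0) :
    ∃ e ∈ subfieldE F s, d = e * c := by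
  obtain ⟨e, rfl⟩ : ∃ e, d = e * c := ⟨d / c, (div_mul_cancel₀ d hc).symm⟩
  refine ⟨e, ?_, rfl⟩
  -- `Tr (c y) = 0` for `y = c⁻¹ (t^q + t)`, and `Tr (e t^q) = Tr (e^(q^2) t)`.
  have hperp : ∀ t, trFE s (((e ^ 2 ^ s) ^ 2 ^ s + e) * t) = 0 := by
    intro t
    have h := hcd (c⁻¹ * (t ^ 2 ^ s + t)) (by
      rw [mul_inv_cancel_left₀ hc, trFE_add, trFE_pow hF, CharTwo.add_self_eq_zero])
    rwa [mul_assoc, mul_inv_cancel_left₀ hc, mul_add, trFE_add, trFE_mul_pow_two_pow hF,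
      ← trFE_add, ← add_mul] at h
  have hfix : (e ^ 2 ^ s) ^ 2 ^ s = e :=
    CharTwo.add_eq_zero.mp (eq_zero_of_forall_trFE_mul_eq_zero hF hs hperp)
  rw [mem_subfieldE]
  conv_rhs => rw [← pow_two_pow_pow_two_pow_pow_two_pow hF e, hfix]

theorem exists_eq_mul_add_mul (hF : Fintype.card F = 2 ^ (3 * s)) (hs : 1 ≤ s) {c u v w : F}
    (hc : c ≠ 0) (hu0 : u ≠ 0) (hu : trFE s (c * u) = 0) (hv : trFE s (c * v) = 0)
    (huv : ∀ l ∈ subfieldE F s, v ≠ l * u) (hw : trFE s (c * w) = 0) :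
    ∃ l ∈ subfieldE F s, ∃ m ∈ subfieldE F s, w = l * u + m * v := by
  set E : Set F := (subfieldE F s : Set F)
  let f : F × F → F := fun p ↦ p.1 * u + p.2 * v
  have hinj : Set.InjOn f (E ×ˢ E) := by
    rintro ⟨l₁, m₁⟩ ⟨hl₁, hm₁⟩ ⟨l₂, m₂⟩ ⟨hl₂, hm₂⟩ h
    simp only [f] at h
    by_cases hm : m₁ = m₂
    · subst hm
      simpa using mul_right_cancel₀ hu0 (add_right_cancel h)
    · refine absurd ?_ (huv ((l₁ - l₂) / (m₂ - m₁))
        (div_mem (sub_mem hl₁ hl₂) (sub_mem hm₂ hm₁)))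
      rw [div_mul_eq_mul_div, eq_div_iff (sub_ne_zero.mpr (Ne.symm hm))]
      linear_combination -h
  have hsub : f '' (E ×ˢ E) ⊆ {x | trFE s (c * x) = 0} := by
    rintro _ ⟨⟨l, m⟩, ⟨hl, hm⟩, rfl⟩
    simp only [f, Set.mem_ofPred_eq, mul_add, mul_left_comm c, trFE_add, trFE_mul_of_mem hl,
      trFE_mul_of_mem hm, hu, hv, mul_zero, add_zero]
  have heq := Set.eq_of_subset_of_ncard_le hsub (by
    rw [hinj.ncard_image, Set.ncard_prod, ncard_subfieldE hF hs]
    exact ncard_setOf_trFE_mul_eq_zero_le hs hc)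
  obtain ⟨⟨l, m⟩, ⟨hl, hm⟩, hlm⟩ : w ∈ f '' (E ×ˢ E) := by rw [heq]; exact hw
  exact ⟨l, hl, m, hm, hlm.symm⟩

theorem trFEPolar_ne_zero (hF : Fintype.card F = 2 ^ (3 * s)) (hs : 1 ≤ s) {c u v : F}
    (hc : c ≠ 0) (hu0 : u ≠ 0) (hu : trFE s (c * u) = 0) (hv : trFE s (c * v) = 0)
    (huv : ∀ l ∈ subfieldE F s, v ≠ l * u) (hQu : trFE s (u ^ (2 ^ s + 1)) = 0)
    (hQv : trFE s (v ^ (2 ^ s + 1)) = 0) : trFEPolar s u v ≠ 0 := by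
  intro hB
  have hspan := fun {w} ↦ exists_eq_mul_add_mul hF hs hc hu0 hu hv huv (w := w)
  have hE : ∀ w ∈ subfieldE F s, trFE s (c * w) = 0 → w = 0 := by
    intro w hwE hw
    by_contra hw0
    rw [mul_comm, trFE_mul_of_mem hwE, mul_eq_zero, or_iff_right hw0, ← mul_one c] at hw
    obtain ⟨l, hl, m, hm, h1⟩ := hspan hw
    have hQ1 := trFE_smul_add_smul_pow_add_one hF hl hm u v
    rw [← h1, hQu, hQv, hB, one_pow, trFE_of_mem (one_mem _)] at hQ1
    simp at hQ1
  have hperp : ∀ x, trFEPolar s x u = 0 → trFEPolar s x v = 0 →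
      ∀ y, trFE s (c * y) = 0 → trFE s ((trFE s x + x) * y) = 0 := by
    intro x hxu hxv y hy
    obtain ⟨l, hl, m, hm, rfl⟩ := hspan hy
    rw [← trFEPolar_eq hF, trFEPolar_add_right, trFEPolar_mul_right hl, trFEPolar_mul_right hm,
      hxu, hxv, mul_zero, mul_zero, add_zero]
  obtain ⟨e₁, he₁, h₁⟩ := exists_mem_subfieldE_eq_mul hF hs hc
    (hperp u (trFEPolar_self u) hB)
  obtain ⟨e₂, he₂, h₂⟩ := exists_mem_subfieldE_eq_mul hF hs hc
    (hperp v (trFEPolar_comm u v ▸ hB) (trFEPolar_self v))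
  have he₁0 : e₁ ≠ 0 := by
    rintro rfl
    rw [zero_mul, CharTwo.add_eq_zero] at h₁
    exact hu0 (hE u (h₁ ▸ trFE_mem hF u) hu)
  have hw : trFE s (e₂ * u + e₁ * v) = e₂ * u + e₁ * v := by
    rw [← CharTwo.add_eq_zero, trFE_add, trFE_mul_of_mem he₂, trFE_mul_of_mem he₁]
    linear_combination e₂ * h₁ + e₁ * h₂ + e₂ * e₁ * c * (CharTwo.two_eq_zero : (2 : F) = 0)
  have hwH : trFE s (c * (e₂ * u + e₁ * v)) = 0 := by
    rw [mul_add, mul_left_comm, mul_left_comm c, trFE_add, trFE_mul_of_mem he₂,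
      trFE_mul_of_mem he₁, hu, hv, mul_zero, mul_zero, add_zero]
  have hw0 := CharTwo.add_eq_zero.mp (hE _ (hw ▸ trFE_mem hF _) hwH)
  refine huv (e₂ / e₁) (div_mem he₂ he₁) ?_
  rw [div_mul_eq_mul_div, hw0, mul_div_cancel_left₀ v he₁0]

theorem ncard_puncturedLine (hF : Fintype.card F = 2 ^ (3 * s)) (hs : 1 ≤ s) {u : F}
    (hu : u ≠ 0) : (puncturedLine s u).ncard = 2 ^ s - 1 := by
  rw [puncturedLine, (mul_left_injective₀ hu).injOn.ncard_image,
    Set.ncard_sdiff_singleton_of_mem (zero_mem _), ncard_subfieldE hF hs]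

theorem mem_puncturedLine_union (hF : Fintype.card F = 2 ^ (3 * s)) (hs : 1 ≤ s) {ω u v x : F}
    {a : ℤ} (hc : ω ^ a ≠ 0) (hu : u ∈ Sa s ω a) (hv : v ∈ Sa s ω a) (hx : x ∈ Sa s ω a)
    (huv : ∀ l ∈ subfieldE F s, v ≠ l * u) : x ∈ puncturedLine s u ∪ puncturedLine s v := by
  obtain ⟨hu0, hQu, hHu⟩ := hu
  obtain ⟨-, hQv, hHv⟩ := hv
  obtain ⟨hx0, hQx, hHx⟩ := hx
  obtain ⟨l, hl, m, hm, rfl⟩ := exists_eq_mul_add_mul hF hs hc hu0 hHu hHv huv hHx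
  rw [trFE_smul_add_smul_pow_add_one hF hl hm, hQu, hQv, mul_zero, mul_zero, zero_add,
    zero_add] at hQx
  rcases mul_eq_zero.mp hQx with hlm | hB
  · rcases mul_eq_zero.mp hlm with rfl | rfl
    · exact Or.inr ⟨m, ⟨hm, fun hm0 ↦ hx0 (by simp [Set.mem_singleton_iff.mp hm0])⟩, by simp⟩
    · exact Or.inl ⟨l, ⟨hl, fun hl0 ↦ hx0 (by simp [Set.mem_singleton_iff.mp hl0])⟩, by simp⟩
  · exact absurd hB (trFEPolar_ne_zero hF hs hc hu0 hHu hHv huv hQu hQv)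

theorem ncard_Sa (hF : Fintype.card F = 2 ^ (3 * s)) (hs : 1 ≤ s) {ω : F} {a : ℤ}
    (hc : ω ^ a ≠ 0) : (Sa s ω a).ncard = 0 ∨ (Sa s ω a).ncard = 2 ^ s - 1 ∨
      (Sa s ω a).ncard = 2 * (2 ^ s - 1) := by
  rcases (Sa s ω a).eq_empty_or_nonempty with hempty | ⟨u, hu⟩
  · exact Or.inl (hempty ▸ Set.ncard_empty F)
  by_cases hline : Sa s ω a ⊆ puncturedLine s u
  · right; left
    rw [hline.antisymm (puncturedLine_subset_Sa hu), ncard_puncturedLine hF hs hu.1]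
  obtain ⟨v, hv, hvu⟩ := Set.not_subset.mp hline
  have huv : ∀ l ∈ subfieldE F s, v ≠ l * u := fun l hl h ↦
    hvu ⟨l, ⟨hl, fun hl0 ↦ hv.1 (by simp [h, Set.mem_singleton_iff.mp hl0])⟩, h.symm⟩
  have hSa : Sa s ω a = puncturedLine s u ∪ puncturedLine s v :=
    subset_antisymm (fun x hx ↦ mem_puncturedLine_union hF hs hc hu hv hx huv)
      (Set.union_subset (puncturedLine_subset_Sa hu) (puncturedLine_subset_Sa hv))
  right; right
  rw [hSa, Set.ncard_union_eq (disjoint_puncturedLine huv), ncard_puncturedLine hF hs hu.1,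
    ncard_puncturedLine hF hs hv.1, two_mul]

end CharTwo

theorem ne_zero_of_forall_ne_zero_eq_pow {K : Type*} [Field K] [Fintype K]
    (hK : 2 < Fintype.card K) {ω : K} (hω : ∀ x : K, x ≠ 0 → ∃ n : ℕ, x = ω ^ n) : ω ≠ 0 := by
  classical
  rintro rfl
  obtain ⟨x, -, hx⟩ := Finset.exists_mem_notMem_of_card_lt_card
    (s := {0, 1}) (t := Finset.univ) ((Finset.card_le_two).trans_lt hK)
  obtain ⟨n, hn⟩ := hω x (by aesop)
  rcases n with _ | n <;> simp_all

theorem statement1 (s : ℕ) (hs : 1 ≤ s) (F : Type*) [Field F] [Fintype F]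
    (hF : Fintype.card F = 2 ^ (3 * s)) (ω : F)
    (hω : ∀ x : F, x ≠ 0 → ∃ n : ℕ, x = ω ^ n) :
    ∀ a : ℤ,
      (Sa s ω a).ncard = 0 ∨ (Sa s ω a).ncard = 2 ^ s - 1 ∨
        (Sa s ω a).ncard = 2 * (2 ^ s - 1) := by
  intro a
  have : CharP F 2 := charP_of_card_eq_prime_pow hF
  have hK : 2 < Fintype.card F := by
    rw [hF]
    calc 2 < 2 ^ 3 := by norm_num
      _ ≤ 2 ^ (3 * s) := Nat.pow_le_pow_right two_pos (by omega)
  exact ncard_Sa hF hs (zpow_ne_zero a (ne_zero_of_forall_ne_zero_eq_pow hK hω))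
end
end

section
/- For every integer a, the class of a modulo M lies in T_1 if and only if Tr_{F/E}(ω^a) = 0; that is, T_1 = {i ∈ ℤ/Mℤ : Tr_{F/E}(ω^i) = 0}. -/
noncomputable section

open scoped BigOperators

/-!
Write `q = 2^s` and `Q(u) = Tr(u^{q+1})`, a quadratic form on the 3-dimensional `E`-space `F`.
Since `ω^M ∈ E`, the condition `Tr(ω^a) = 0` depends only on `a mod M`. For `u ≠ 0` we have
`Q(u) = u^M Tr(u⁻¹)`, so on `S = {u ≠ 0 : Q(u) = 0, Tr(c u) = 0}` the map `u ↦ (c u)⁻¹` is an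
involution; a fixed point would satisfy `c = (c u)²`, hence `Tr c = Tr(c u)² = 0`. So if `Tr c ≠ 0`
then `|S|` is even, while `q - 1` is odd.

If `Tr c = 0`, the plane `Tr(c u) = 0` (of size `q²`, the root set of a divisor of `X^{q³} - X`)
contains `E`, hence equals `E ⊕ E w` for any `w` in it outside `E`. On this plane
`Q(x + y w) = x² + y² Q(w) = (x + y r)²` with `r² = Q(w)`, `r ∈ E`, so the plane is tangent to
the conic and `S = E^× (r + w)` has `q - 1` elements.
-/

open Polynomial

namespace TraceConic

section Polynomial

variable {R : Type*} [CommRing R] [CharP R 2] (s : ℕ)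

lemma X_pow_two_pow_sub_X_dvd : (X ^ 2 ^ s - X : R[X]) ∣ X ^ 2 ^ (3 * s) - X := by
  set D : R[X] := X ^ 2 ^ s - X
  have h : X ^ 2 ^ (3 * s) - X = D + D ^ 2 ^ s + D ^ 2 ^ (2 * s) := by
    simp only [D, sub_pow_char_pow, ← pow_mul, ← pow_add]
    ring_nf
  rw [h]
  exact dvd_add (dvd_add dvd_rfl (dvd_pow_self D (by positivity))) (dvd_pow_self D (by positivity))

lemma X_add_X_pow_add_X_pow_dvd :
    (X + X ^ 2 ^ s + X ^ 2 ^ (2 * s) : R[X]) ∣ X ^ 2 ^ (3 * s) - X := by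
  set T : R[X] := X + X ^ 2 ^ s + X ^ 2 ^ (2 * s)
  have h : X ^ 2 ^ (3 * s) - X = T ^ 2 ^ s - T := by
    simp only [T, add_pow_char_pow, ← pow_mul, ← pow_add]
    ring_nf
  rw [h]
  exact dvd_sub (dvd_pow_self T (by positivity)) dvd_rfl

end Polynomial

lemma ncard_setOf_isRoot_of_dvd {K : Type*} [Field K] [Fintype K] {f : K[X]}
    (hf : f ∣ X ^ Fintype.card K - X) : {x | f.IsRoot x}.ncard = f.natDegree := by
  classical
  have h₀ : (X ^ Fintype.card K - X : K[X]) ≠ 0 :=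
    FiniteField.X_pow_card_sub_X_ne_zero K Fintype.one_lt_card
  have hf₀ : f ≠ 0 := ne_zero_of_dvd_ne_zero h₀ hf
  have hnodup : f.roots.Nodup := by
    refine Multiset.nodup_of_le (roots.le_of_dvd h₀ hf) ?_
    rw [FiniteField.roots_X_pow_card_sub_X]
    exact Finset.univ.nodup
  have hsplit : f.Splits := by
    refine Splits.of_dvd ?_ h₀ hf
    simpa [Nat.card_eq_fintype_card] using (splits_X_pow_nat_card_sub_X (K := K))
  have hset : {x | f.IsRoot x} = ↑f.roots.toFinset := by
    ext x
    simp [mem_roots hf₀]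
  rw [hset, Set.ncard_coe_finset, Multiset.toFinset_card_of_nodup hnodup,
    hsplit.natDegree_eq_card_roots]

lemma even_ncard_of_involution {α : Type*} {S : Set α} (hS : S.Finite) (g : α → α)
    (hgS : ∀ x ∈ S, g x ∈ S) (hgg : ∀ x ∈ S, g (g x) = x) (hg : ∀ x ∈ S, g x ≠ x) :
    Even S.ncard := by
  rw [Set.ncard_eq_toFinset_card S hS, ← ZMod.natCast_eq_zero_iff_even, Finset.card_eq_sum_ones,
    Nat.cast_sum, Nat.cast_one]
  refine Finset.sum_involution (fun x _ => g x) (fun _ _ => CharTwo.add_self_eq_zero 1)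
    (fun x hx _ => hg x (hS.mem_toFinset.mp hx)) (fun x hx => ?_) (fun x hx => ?_)
  · exact hS.mem_toFinset.mpr (hgS x (hS.mem_toFinset.mp hx))
  · exact hgg x (hS.mem_toFinset.mp hx)

lemma ne_zero_of_forall_eq_pow {K : Type*} [Field K] [Fintype K] (hK : 2 < Fintype.card K) {ω : K}
    (hω : ∀ x : K, x ≠ 0 → ∃ n : ℕ, x = ω ^ n) : ω ≠ 0 := by
  classical
  rintro rfl
  have hsub : (Finset.univ : Finset K) ⊆ {0, 1} := by
    intro x _
    by_cases hx : x = 0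
    · simp [hx]
    obtain ⟨n, rfl⟩ := hω x hx
    rcases n with _ | n
    · simp
    · simp at hx
  exact absurd ((Finset.card_le_card hsub).trans (Finset.card_le_two)) (by simpa using hK.not_ge)

/-- The subfield `E`. -/
def frobFixed (F : Type*) [Field F] [CharP F 2] (s : ℕ) : Subfield F :=
  (iterateFrobenius F 2 s).eqLocusField (RingHom.id F)

@[simp] lemma mem_frobFixed {F : Type*} [Field F] [CharP F 2] {s : ℕ} {x : F} :
    x ∈ frobFixed F s ↔ x ^ 2 ^ s = x := by
  simp [frobFixed, RingHom.eqLocusField, iterateFrobenius_def]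

/-- `S_a = conicLineMeet s (ω ^ a)`. -/
def conicLineMeet {F : Type*} [Field F] (s : ℕ) (c : F) : Set F :=
  {u | u ≠ 0 ∧ trFE s (u ^ (2 ^ s + 1)) = 0 ∧ trFE s (c * u) = 0}

section Field

variable {F : Type*} [Field F] [CharP F 2] (s : ℕ)

lemma trFE_mul_of_mem_frobFixed {e : F} (he : e ∈ frobFixed F s) (x : F) :
    trFE s (e * x) = e * trFE s x := by
  have he₂ : e ^ 2 ^ (2 * s) = e := by
    rw [two_mul, pow_add, pow_mul, mem_frobFixed.mp he, mem_frobFixed.mp he]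
  simp only [trFE, mul_pow, mem_frobFixed.mp he, he₂]
  ring

lemma trFE_add (x y : F) : trFE s (x + y) = trFE s x + trFE s y := by
  simp only [trFE, add_pow_char_pow]
  ring

lemma trFE_mul_add_mul_eq_zero {c w x y : F} (htc : trFE s c = 0) (hw : trFE s (c * w) = 0)
    (hx : x ∈ frobFixed F s) (hy : y ∈ frobFixed F s) : trFE s (c * (x + y * w)) = 0 := by
  rw [mul_add, trFE_add, mul_comm c x, ← mul_assoc, mul_comm c y, mul_assoc,
    trFE_mul_of_mem_frobFixed s hx, trFE_mul_of_mem_frobFixed s hy, htc, hw, mul_zero, mul_zero,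
    add_zero]

lemma trFE_pow_char_pow (k : ℕ) (x : F) : trFE s (x ^ 2 ^ k) = trFE s x ^ 2 ^ k := by
  simp only [trFE, add_pow_char_pow, ← pow_mul, mul_comm]

lemma trFE_one : trFE s (1 : F) = 1 := by
  simp only [trFE, one_pow, CharTwo.add_self_eq_zero, zero_add]

end Field

section Finite

variable {F : Type*} [Field F] [Fintype F] {s : ℕ}

lemma pow_two_pow_three_mul_eq (hF : Fintype.card F = 2 ^ (3 * s)) (x : F) :
    x ^ 2 ^ (3 * s) = x :=
  hF ▸ FiniteField.pow_card x

lemma trFE_pow_two_pow (hF : Fintype.card F = 2 ^ (3 * s)) (x : F) :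
    trFE s (x ^ 2 ^ s) = trFE s x := by
  have h := pow_two_pow_three_mul_eq hF x
  simp only [trFE, ← pow_mul, ← pow_add] at h ⊢
  ring_nf at h ⊢
  rw [h]
  ring

lemma trFE_pow_add_one_eq_zero_iff (hF : Fintype.card F = 2 ^ (3 * s)) {u : F} (hu : u ≠ 0) :
    trFE s (u ^ (2 ^ s + 1)) = 0 ↔ trFE s u⁻¹ = 0 := by
  have h := pow_two_pow_three_mul_eq hF u
  have key : trFE s (u ^ (2 ^ s + 1)) = u ^ Mof s * trFE s u⁻¹ := by
    simp only [trFE, Mof, inv_pow, ← pow_mul] at h ⊢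
    field_simp
    ring_nf at h ⊢
    rw [h]
    ring
  rw [key, mul_eq_zero, or_iff_right (pow_ne_zero _ hu)]

variable [CharP F 2]

lemma pow_mof_mem_frobFixed (hF : Fintype.card F = 2 ^ (3 * s)) (x : F) :
    x ^ Mof s ∈ frobFixed F s := by
  have e : Mof s * 2 ^ s = 2 ^ (3 * s) + 2 ^ (2 * s) + 2 ^ s := by ring
  rw [mem_frobFixed, ← pow_mul, e, pow_add, pow_add, pow_two_pow_three_mul_eq hF, Mof, pow_add,
    pow_add, pow_one]
  ring

lemma trFE_mem_frobFixed (hF : Fintype.card F = 2 ^ (3 * s)) (x : F) :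
    trFE s x ∈ frobFixed F s :=
  mem_frobFixed.mpr <| (trFE_pow_char_pow s s x).symm.trans (trFE_pow_two_pow hF x)

lemma ncard_frobFixed (hs : s ≠ 0) (hF : Fintype.card F = 2 ^ (3 * s)) :
    (frobFixed F s : Set F).ncard = 2 ^ s := by
  have hq : 1 < 2 ^ s := Nat.one_lt_two_pow hs
  have hset : (frobFixed F s : Set F) = {x | (X ^ 2 ^ s - X : F[X]).IsRoot x} := by
    ext x
    simp [sub_eq_zero]
  rw [hset, ncard_setOf_isRoot_of_dvd (hF ▸ X_pow_two_pow_sub_X_dvd s),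
    FiniteField.X_pow_card_sub_X_natDegree_eq F hq]

lemma ncard_setOf_trFE_eq_zero (hs : s ≠ 0) (hF : Fintype.card F = 2 ^ (3 * s)) :
    {x : F | trFE s x = 0}.ncard = 2 ^ (2 * s) := by
  have hq : 2 ^ s < 2 ^ (2 * s) := Nat.pow_lt_pow_right one_lt_two (by omega)
  have hdeg : (X + X ^ 2 ^ s + X ^ 2 ^ (2 * s) : F[X]).natDegree = 2 ^ (2 * s) := by
    rw [natDegree_add_eq_right_of_natDegree_lt] <;> rw [natDegree_X_pow]
    refine (natDegree_add_le _ _).trans_lt ?_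
    rw [natDegree_X, natDegree_X_pow]
    exact max_lt (Nat.one_lt_two_pow hs |>.trans hq) hq
  have hset :
      {x : F | trFE s x = 0} = {x | (X + X ^ 2 ^ s + X ^ 2 ^ (2 * s) : F[X]).IsRoot x} := by
    ext x
    simp [trFE]
  rw [hset, ncard_setOf_isRoot_of_dvd (hF ▸ X_add_X_pow_add_X_pow_dvd s), hdeg]

lemma ncard_setOf_trFE_mul_eq_zero (hs : s ≠ 0) (hF : Fintype.card F = 2 ^ (3 * s)) {c : F}
    (hc : c ≠ 0) : {u : F | trFE s (c * u) = 0}.ncard = 2 ^ (2 * s) := by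
  rw [← ncard_setOf_trFE_eq_zero hs hF]
  exact Set.ncard_preimage_of_injective_subset_range (s := {x | trFE s x = 0})
    (mul_right_injective₀ hc)
    fun y _ => ⟨c⁻¹ * y, mul_inv_cancel_left₀ hc y⟩

lemma exists_sq_eq_of_mem_frobFixed {t : F} (ht : t ∈ frobFixed F s) :
    ∃ r ∈ frobFixed F s, r ^ 2 = t := by
  obtain ⟨r, rfl⟩ := FiniteField.isSquare_of_char_two (ringChar.eq F 2) t
  refine ⟨r, mem_frobFixed.mpr (frobenius_inj F 2 ?_), sq r⟩
  rw [frobenius_def, frobenius_def, pow_right_comm, sq r, mem_frobFixed.mp ht]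

lemma exists_trFE_mul_eq_zero_notMem_frobFixed (hs : s ≠ 0) (hF : Fintype.card F = 2 ^ (3 * s))
    {c : F} (hc : c ≠ 0) : ∃ w, trFE s (c * w) = 0 ∧ w ∉ frobFixed F s := by
  have hlt : (frobFixed F s : Set F).ncard < {u : F | trFE s (c * u) = 0}.ncard := by
    rw [ncard_frobFixed hs hF, ncard_setOf_trFE_mul_eq_zero hs hF hc]
    exact Nat.pow_lt_pow_right one_lt_two (by omega)
  exact Set.exists_mem_notMem_of_ncard_lt_ncard hlt

lemma setOf_trFE_mul_eq_zero_eq_image (hs : s ≠ 0) (hF : Fintype.card F = 2 ^ (3 * s))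
    {c w : F} (hc : c ≠ 0) (htc : trFE s c = 0) (hw : trFE s (c * w) = 0)
    (hwE : w ∉ frobFixed F s) :
    {u : F | trFE s (c * u) = 0} =
      (fun p : F × F => p.1 + p.2 * w) '' ((frobFixed F s : Set F) ×ˢ (frobFixed F s : Set F)) := by
  have hinj : Set.InjOn (fun p : F × F => p.1 + p.2 * w)
      ((frobFixed F s : Set F) ×ˢ (frobFixed F s : Set F)) := by
    rintro ⟨x, y⟩ ⟨hx, hy⟩ ⟨x', y'⟩ ⟨hx', hy'⟩ h
    simp only at h
    by_cases hyy : y = y'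
    · subst hyy
      simp [add_right_cancel h]
    · refine absurd ?_ hwE
      have hw' : w = (x' - x) / (y - y') := by
        rw [eq_div_iff (sub_ne_zero.mpr hyy)]
        linear_combination h
      rw [hw']
      exact div_mem (sub_mem hx' hx) (sub_mem hy hy')
  refine (Set.eq_of_subset_of_ncard_le ?_ ?_).symm
  · rintro _ ⟨⟨x, y⟩, ⟨hx, hy⟩, rfl⟩
    exact trFE_mul_add_mul_eq_zero s htc hw hx hy
  · rw [hinj.ncard_image, Set.ncard_prod, ncard_frobFixed hs hF,
      ncard_setOf_trFE_mul_eq_zero hs hF hc, ← pow_add, two_mul]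

lemma trFE_pow_add_one_add_mul (hF : Fintype.card F = 2 ^ (3 * s)) {w r x y : F}
    (hr : r ^ 2 = trFE s (w ^ (2 ^ s + 1))) (hx : x ∈ frobFixed F s) (hy : y ∈ frobFixed F s) :
    trFE s ((x + y * w) ^ (2 ^ s + 1)) = (x + y * r) ^ 2 := by
  have hexp : (x + y * w) ^ (2 ^ s + 1) =
      x ^ 2 * 1 + (x * y) * (w ^ 2 ^ s + w) + y ^ 2 * w ^ (2 ^ s + 1) := by
    rw [pow_succ, add_pow_char_pow, mul_pow, mem_frobFixed.mp hx, mem_frobFixed.mp hy]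
    ring
  rw [hexp, trFE_add, trFE_add, trFE_mul_of_mem_frobFixed s (pow_mem hx 2),
    trFE_mul_of_mem_frobFixed s (mul_mem hx hy), trFE_mul_of_mem_frobFixed s (pow_mem hy 2),
    trFE_add, trFE_pow_two_pow hF, CharTwo.add_self_eq_zero, trFE_one, ← hr, CharTwo.add_sq]
  ring

lemma conicLineMeet_eq_image (hs : s ≠ 0) (hF : Fintype.card F = 2 ^ (3 * s)) {c w r : F}
    (hc : c ≠ 0) (htc : trFE s c = 0) (hw : trFE s (c * w) = 0) (hwE : w ∉ frobFixed F s)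
    (hr : r ^ 2 = trFE s (w ^ (2 ^ s + 1))) (hrE : r ∈ frobFixed F s) :
    conicLineMeet s c = (fun y => y * (r + w)) '' ((frobFixed F s : Set F) \ {0}) := by
  have hrw : r + w ≠ 0 := fun h => hwE ((add_mem_cancel_left hrE).mp (h ▸ zero_mem _))
  ext u
  constructor
  · rintro ⟨hu, hQ, hcu⟩
    have hcu' : u ∈ {u : F | trFE s (c * u) = 0} := hcu
    rw [setOf_trFE_mul_eq_zero_eq_image hs hF hc htc hw hwE] at hcu'
    obtain ⟨⟨x, y⟩, ⟨hx, hy⟩, rfl⟩ := hcu'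
    dsimp only at hx hy hu hQ ⊢
    rw [trFE_pow_add_one_add_mul hF hr hx hy, sq_eq_zero_iff, CharTwo.add_eq_zero] at hQ
    subst hQ
    refine ⟨y, ⟨hy, ?_⟩, by ring⟩
    rintro rfl
    simp at hu
  · rintro ⟨y, ⟨hy, hy0⟩, rfl⟩
    have hyr : y * r ∈ frobFixed F s := mul_mem hy hrE
    have hu : y * (r + w) = y * r + y * w := mul_add y r w
    dsimp only
    refine ⟨mul_ne_zero hy0 hrw, ?_, ?_⟩
    · rw [hu, trFE_pow_add_one_add_mul hF hr hyr hy, CharTwo.add_self_eq_zero, sq, mul_zero]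
    · rw [hu]
      exact trFE_mul_add_mul_eq_zero s htc hw hyr hy

lemma ncard_conicLineMeet_of_trFE_eq_zero (hs : s ≠ 0) (hF : Fintype.card F = 2 ^ (3 * s))
    {c : F} (hc : c ≠ 0) (htc : trFE s c = 0) : (conicLineMeet s c).ncard = 2 ^ s - 1 := by
  obtain ⟨w, hw, hwE⟩ := exists_trFE_mul_eq_zero_notMem_frobFixed hs hF hc
  obtain ⟨r, hrE, hr⟩ := exists_sq_eq_of_mem_frobFixed (trFE_mem_frobFixed hF (w ^ (2 ^ s + 1)))
  have hrw : r + w ≠ 0 := fun h => hwE ((add_mem_cancel_left hrE).mp (h ▸ zero_mem _))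
  rw [conicLineMeet_eq_image hs hF hc htc hw hwE hr hrE,
    (mul_left_injective₀ hrw).injOn.ncard_image, Set.ncard_sdiff_singleton_of_mem (zero_mem _),
    ncard_frobFixed hs hF]

lemma even_ncard_conicLineMeet (hF : Fintype.card F = 2 ^ (3 * s)) {c : F} (hc : c ≠ 0)
    (htc : trFE s c ≠ 0) : Even (conicLineMeet s c).ncard := by
  refine even_ncard_of_involution (Set.toFinite _) (fun u => (c * u)⁻¹) ?_ ?_ ?_
  · rintro u ⟨hu, hQ, hcu⟩
    have hcu₀ : c * u ≠ 0 := mul_ne_zero hc hu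
    refine ⟨inv_ne_zero hcu₀, ?_, ?_⟩
    · rwa [trFE_pow_add_one_eq_zero_iff hF (inv_ne_zero hcu₀), inv_inv]
    · rwa [show c * (c * u)⁻¹ = u⁻¹ by field_simp, ← trFE_pow_add_one_eq_zero_iff hF hu]
  · rintro u ⟨hu, -⟩
    field_simp
  · rintro u ⟨hu, -, hcu⟩ hfix
    have hsq : (c * u) ^ 2 = c := by
      rw [inv_eq_iff_eq_inv] at hfix
      rw [sq, mul_assoc, hfix, mul_inv_cancel₀ hu, mul_one]
    apply htc
    rw [← hsq, ← pow_one 2, trFE_pow_char_pow, hcu, zero_pow (by norm_num)]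

theorem ncard_conicLineMeet_eq_iff (hs : s ≠ 0) (hF : Fintype.card F = 2 ^ (3 * s)) {c : F}
    (hc : c ≠ 0) : (conicLineMeet s c).ncard = 2 ^ s - 1 ↔ trFE s c = 0 := by
  refine ⟨fun h => by_contra fun htc => ?_, ncard_conicLineMeet_of_trFE_eq_zero hs hF hc⟩
  have hodd : Odd (2 ^ s - 1) :=
    Nat.Even.sub_odd Nat.one_le_two_pow ((Nat.even_pow' hs).mpr even_two) odd_one
  exact Nat.not_even_iff_odd.mpr hodd (h ▸ even_ncard_conicLineMeet hF hc htc)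

lemma trFE_zpow_eq_zero_iff_of_modEq (hF : Fintype.card F = 2 ^ (3 * s)) {ω : F} (hω : ω ≠ 0)
    {a b : ℤ} (hab : a ≡ b [ZMOD Mof s]) : trFE s (ω ^ a) = 0 ↔ trFE s (ω ^ b) = 0 := by
  obtain ⟨k, hk⟩ := hab.dvd
  have hE : (ω ^ Mof s) ^ k ∈ frobFixed F s := zpow_mem (pow_mof_mem_frobFixed hF ω) k
  have hb : ω ^ b = (ω ^ Mof s) ^ k * ω ^ a := by
    rw [← zpow_natCast, ← zpow_mul, ← zpow_add₀ hω, ← hk, sub_add_cancel]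
  rw [hb, trFE_mul_of_mem_frobFixed s hE, mul_eq_zero,
    or_iff_right (zpow_ne_zero _ (pow_ne_zero _ hω))]

end Finite

end TraceConic

open TraceConic in
theorem statement4 (s : ℕ) (hs : 1 ≤ s) (F : Type*) [Field F] [Fintype F]
    (hF : Fintype.card F = 2 ^ (3 * s)) (ω : F)
    (hω : ∀ x : F, x ≠ 0 → ∃ n : ℕ, x = ω ^ n) :
    ∀ a : ℤ, ((a : ZMod (Mof s)) ∈ T1 s ω ↔ trFE s (ω ^ a) = 0) := by
  intro a
  have : CharP F 2 := charP_of_card_eq_prime_pow hF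
  have hcard : 2 < Fintype.card F :=
    hF ▸ (by norm_num : 2 < 2 ^ 3).trans_le (Nat.pow_le_pow_right two_pos (by omega))
  have hω₀ : ω ≠ 0 := ne_zero_of_forall_eq_pow hcard hω
  have hval : ((a : ZMod (Mof s)).val : ℤ) ≡ a [ZMOD Mof s] :=
    (ZMod.intCast_eq_intCast_iff _ _ _).mp (by simp)
  change (conicLineMeet s (ω ^ ((a : ZMod (Mof s)).val : ℤ))).ncard = 2 ^ s - 1 ↔ _
  rw [ncard_conicLineMeet_eq_iff (by omega) hF (zpow_ne_zero _ hω₀),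
    trFE_zpow_eq_zero_iff_of_modEq hF hω₀ hval]
end
end

section
/- For every a ∈ ℤ/Mℤ, the number of pairs (i, j) ∈ T_1 × T_1 with i + j = a equals 1 if a ∈ T_1, equals 2 if a ∈ T_2, and equals 0 if a ∈ T_3; that is, T_1² = T_1 + 2·T_2 in the group ring ℤ[ℤ/Mℤ]. -/
noncomputable section

open scoped BigOperators

/-!
Write `q = 2^s`, `Tr = Tr_{F/E}` and `V = ker Tr`, a plane over `E = {x | x^q = x}`.
Inversion identifies `S_a` with `{u ∈ V \ {0} | Tr(c/u) = 0}`, `c = ω^a`, and multiplying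
`Tr(c/u)` by the norm `u^{1+q+q²}` turns this condition into the vanishing of an `E`-quadratic
form `g_c` on `V` whose polar form is `Tr(c)·(x y^q + x^q y)`. If `Tr(c) = 0`, then `g_c` is the
square of a linear form and its nonzero zeros form exactly one line `E^×·α`; otherwise a nonzero
zero `u` can be moved off its line to a second one, so the count is never `q - 1`. Hence
`a ∈ T₁ ↔ Tr(ω^a) = 0`. Writing `u = λ·ω^i` with `λ ∈ E^×` and `i` modulo `M` shows that
`|S_a| = (q - 1)·#{i | Tr(ω^i) = Tr(ω^{a-i}) = 0}`, and that set is in bijection with the pairs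
in `T₁ × T₁` summing to `a`.
-/

namespace TraceCyclotomy

open Polynomial

section Trace

variable {F : Type*} [Field F] {s : ℕ}

theorem trFE_eq (x : F) : trFE s x = x + x ^ 2 ^ s + (x ^ 2 ^ s) ^ 2 ^ s := by
  rw [trFE, ← pow_mul, ← pow_add, two_mul]

theorem trFE_mul_of_pow_eq {c : F} (hc : c ^ 2 ^ s = c) (x : F) :
    trFE s (c * x) = c * trFE s x := by
  simp only [trFE_eq, mul_pow, hc]
  ring

theorem trFE_mul_eq_zero_iff {c : F} (hc : c ^ 2 ^ s = c) (hc0 : c ≠ 0) (x : F) :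
    trFE s (c * x) = 0 ↔ trFE s x = 0 := by
  rw [trFE_mul_of_pow_eq hc, mul_eq_zero, or_iff_right hc0]

theorem pow_pow_pow_eq_self [Fintype F] (hF : Fintype.card F = 2 ^ (3 * s)) (x : F) :
    ((x ^ 2 ^ s) ^ 2 ^ s) ^ 2 ^ s = x := by
  rw [← pow_mul, ← pow_mul, ← pow_add, ← pow_add, show s + (s + s) = 3 * s by ring, ← hF,
    FiniteField.pow_card]

variable [CharP F 2]

theorem trFE_add (x y : F) : trFE s (x + y) = trFE s x + trFE s y := by
  simp only [trFE_eq, add_pow_char_pow]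
  ring

theorem trFE_sq (x : F) : trFE s (x ^ 2) = trFE s x ^ 2 := by
  simp only [trFE_eq, CharTwo.add_sq, ← pow_mul]
  ring

theorem pow_pow_of_trFE_eq_zero {u : F} (hu : trFE s u = 0) :
    (u ^ 2 ^ s) ^ 2 ^ s = u + u ^ 2 ^ s := by
  rwa [trFE_eq, add_eq_zero_iff_eq_neg', CharTwo.neg_eq] at hu

theorem trFE_pow_eq_self [Fintype F] (hF : Fintype.card F = 2 ^ (3 * s)) (x : F) :
    trFE s x ^ 2 ^ s = trFE s x := by
  rw [trFE_eq, add_pow_char_pow, add_pow_char_pow, pow_pow_pow_eq_self hF]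
  ring

end Trace

section FixedSubfield

variable {F : Type*} [Field F] [CharP F 2] {s : ℕ}

variable (F) in
def fixedSubfield (s : ℕ) : Subfield F :=
  (iterateFrobenius F 2 s).eqLocusField (RingHom.id F)

theorem mem_fixedSubfield {x : F} : x ∈ fixedSubfield F s ↔ x ^ 2 ^ s = x := Iff.rfl

variable (F) in
def fixedUnits (s : ℕ) : Set F := (fixedSubfield F s : Set F) \ {0}

theorem mem_fixedUnits {x : F} : x ∈ fixedUnits F s ↔ x ∈ fixedSubfield F s ∧ x ≠ 0 := Iff.rfl

theorem ncard_image_mul_fixedUnits {u : F} (hu : u ≠ 0) :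
    ((· * u) '' fixedUnits F s).ncard = (fixedUnits F s).ncard :=
  Set.ncard_image_of_injective _ (mul_left_injective₀ hu)

theorem disjoint_image_mul_fixedUnits {u w : F} (hu : u ≠ 0) (hwu : w * u⁻¹ ∉ fixedSubfield F s) :
    Disjoint ((· * u) '' fixedUnits F s) ((· * w) '' fixedUnits F s) := by
  rw [Set.disjoint_left]
  rintro _ ⟨l, ⟨hl, -⟩, rfl⟩ ⟨m, ⟨hm, hm0 : m ≠ 0⟩, h : m * w = l * u⟩
  refine hwu ?_
  rw [show w * u⁻¹ = l * m⁻¹ by field_simp; linear_combination h]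
  exact mul_mem hl (inv_mem hm)

theorem mem_fixedSubfield_iff_pow_sub_one {x : F} (hx : x ≠ 0) :
    x ∈ fixedSubfield F s ↔ x ^ (2 ^ s - 1) = 1 := by
  rw [mem_fixedSubfield, ← mul_eq_right₀ hx, ← pow_succ, Nat.sub_add_cancel Nat.one_le_two_pow]

theorem ncard_fixedSubfield_le (hs : s ≠ 0) : (fixedSubfield F s : Set F).ncard ≤ 2 ^ s := by
  classical
  have hq : 1 < 2 ^ s := Nat.one_lt_two_pow hs
  calc (fixedSubfield F s : Set F).ncard
      ≤ ((X ^ 2 ^ s - X : F[X]).roots.toFinset : Set F).ncard := by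
        refine Set.ncard_le_ncard (fun x hx => ?_) (Finset.finite_toSet _)
        simp [mem_roots (FiniteField.X_pow_card_sub_X_ne_zero F hq), mem_fixedSubfield.1 hx]
    _ ≤ (X ^ 2 ^ s - X : F[X]).natDegree := by
        rw [Set.ncard_coe_finset]
        exact (Multiset.toFinset_card_le _).trans (card_roots' _)
    _ = 2 ^ s := FiniteField.X_pow_card_sub_X_natDegree_eq F hq

variable [Fintype F] (hF : Fintype.card F = 2 ^ (3 * s))
include hF

theorem trFE_mem_fixedSubfield (x : F) : trFE s x ∈ fixedSubfield F s :=
  trFE_pow_eq_self hF x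

theorem exists_trFE_eq_zero_mul_inv_notMem (hs : s ≠ 0) {u : F} (hu : u ≠ 0) :
    ∃ v, trFE s v = 0 ∧ v * u⁻¹ ∉ fixedSubfield F s := by
  -- Otherwise `ker Tr ⊆ E·u`, so `|ker Tr|·|range Tr| = q³` with both factors at most `q`.
  by_contra! h
  let T : F →+ F := ⟨⟨trFE s, by simp [trFE]⟩, trFE_add⟩
  have hker : (T.ker : Set F).ncard ≤ 2 ^ s :=
    (Set.ncard_le_ncard_of_injOn (· * u⁻¹) (fun v hv => h v hv)
      (mul_left_injective₀ (inv_ne_zero hu)).injOn).trans (ncard_fixedSubfield_le hs)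
  have hrange : (T.range : Set F).ncard ≤ 2 ^ s := by
    refine (Set.ncard_le_ncard ?_).trans (ncard_fixedSubfield_le hs)
    rintro _ ⟨x, rfl⟩
    exact trFE_mem_fixedSubfield hF x
  have hcard := T.ker.card_mul_index
  rw [AddSubgroup.index_ker, Nat.card_eq_fintype_card (α := F), hF] at hcard
  rw [← Nat.card_coe_set_eq] at hker hrange
  have hq : 2 ≤ 2 ^ s := Nat.le_self_pow hs 2
  have : 2 ^ (3 * s) = 2 ^ s * 2 ^ s * 2 ^ s := by ring
  nlinarith [Nat.mul_le_mul hker hrange]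

end FixedSubfield

section TraceForm

variable {F : Type*} [Field F] {s : ℕ}

def traceForm (s : ℕ) (c u : F) : F :=
  c * (u ^ 2 ^ s * (u ^ 2 ^ s) ^ 2 ^ s) + c ^ 2 ^ s * (u * (u ^ 2 ^ s) ^ 2 ^ s) +
    (c ^ 2 ^ s) ^ 2 ^ s * (u * u ^ 2 ^ s)

def traceZeroSet (s : ℕ) (c : F) : Set F :=
  {u | u ≠ 0 ∧ trFE s u = 0 ∧ trFE s (c * u⁻¹) = 0}

theorem traceForm_eq_mul_trFE {c u : F} (hu : u ≠ 0) :
    traceForm s c u = u * u ^ 2 ^ s * (u ^ 2 ^ s) ^ 2 ^ s * trFE s (c * u⁻¹) := by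
  rw [trFE_eq, traceForm, mul_pow, mul_pow, inv_pow, inv_pow]
  field_simp

theorem mem_traceZeroSet_iff {c u : F} :
    u ∈ traceZeroSet s c ↔ u ≠ 0 ∧ trFE s u = 0 ∧ traceForm s c u = 0 := by
  refine and_congr_right fun hu => and_congr_right fun _ => ?_
  simp [traceForm_eq_mul_trFE hu, hu]

theorem traceForm_mul {c l u : F} (hl : l ^ 2 ^ s = l) :
    traceForm s c (l * u) = l ^ 2 * traceForm s c u := by
  simp only [traceForm, mul_pow, hl]
  ring

theorem trFE_pow_succ_eq_zero_iff [Fintype F] (hF : Fintype.card F = 2 ^ (3 * s)) {v : F}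
    (hv : v ≠ 0) : trFE s (v ^ (2 ^ s + 1)) = 0 ↔ trFE s v⁻¹ = 0 := by
  have key : trFE s (v ^ (2 ^ s + 1)) = traceForm s 1 v := by
    simp only [trFE_eq, traceForm, pow_succ, mul_pow, pow_pow_pow_eq_self hF, one_pow]
    ring
  rw [key, traceForm_eq_mul_trFE hv, one_mul]
  simp [hv]

theorem ncard_Sa [Fintype F] (hF : Fintype.card F = 2 ^ (3 * s)) (ω : F) (n : ℤ) :
    (Sa s ω n).ncard = (traceZeroSet s (ω ^ n)).ncard := by
  have hSa : Sa s ω n = (·⁻¹) ⁻¹' traceZeroSet s (ω ^ n) := by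
    ext v
    simp only [Sa, traceZeroSet, Set.mem_preimage, Set.mem_ofPred_eq, ne_eq, inv_eq_zero, inv_inv]
    exact and_congr_right fun hv => and_congr_left' (trFE_pow_succ_eq_zero_iff hF hv)
  rw [hSa, Set.ncard_preimage_of_injective_subset_range inv_injective (by simp)]

variable [CharP F 2]

theorem traceForm_of_trFE_eq_zero {c u : F} (hu : trFE s u = 0) :
    traceForm s c u = trFE s c * (u * u ^ 2 ^ s) + (c * (u ^ 2 ^ s) ^ 2 + c ^ 2 ^ s * u ^ 2) := by
  rw [traceForm, pow_pow_of_trFE_eq_zero hu, trFE_eq c]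
  ring

theorem traceForm_add {c x y : F} (hx : trFE s x = 0) (hy : trFE s y = 0) :
    traceForm s c (x + y) =
      traceForm s c x + traceForm s c y + trFE s c * (x * y ^ 2 ^ s + x ^ 2 ^ s * y) := by
  have hxy : trFE s (x + y) = 0 := by rw [trFE_add, hx, hy, add_zero]
  rw [traceForm_of_trFE_eq_zero hxy, traceForm_of_trFE_eq_zero hx, traceForm_of_trFE_eq_zero hy,
    add_pow_char_pow]
  linear_combination (c * x ^ 2 ^ s * y ^ 2 ^ s + c ^ 2 ^ s * x * y) * CharTwo.two_eq_zero (R := F)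

theorem traceForm_eq_sq {c α u : F} (hα : α ^ 2 = c) (hc : trFE s c = 0) (hu : trFE s u = 0) :
    traceForm s c u = (α * u ^ 2 ^ s + α ^ 2 ^ s * u) ^ 2 := by
  rw [traceForm_of_trFE_eq_zero hu, hc, ← hα, CharTwo.add_sq]
  ring

theorem polar_mem_fixedSubfield {x y : F} (hx : trFE s x = 0) (hy : trFE s y = 0) :
    x * y ^ 2 ^ s + x ^ 2 ^ s * y ∈ fixedSubfield F s := by
  rw [mem_fixedSubfield, add_pow_char_pow, mul_pow, mul_pow, pow_pow_of_trFE_eq_zero hx,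
    pow_pow_of_trFE_eq_zero hy]
  linear_combination x ^ 2 ^ s * y ^ 2 ^ s * CharTwo.two_eq_zero (R := F)

theorem polar_eq_zero_iff {x y : F} (hx : x ≠ 0) :
    x * y ^ 2 ^ s + x ^ 2 ^ s * y = 0 ↔ y * x⁻¹ ∈ fixedSubfield F s := by
  rw [mem_fixedSubfield, CharTwo.add_eq_zero, mul_pow, inv_pow]
  field_simp

theorem traceForm_mem_fixedSubfield [Fintype F] (hF : Fintype.card F = 2 ^ (3 * s)) (c u : F) :
    traceForm s c u ∈ fixedSubfield F s := by
  rw [mem_fixedSubfield]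
  simp only [traceForm, add_pow_char_pow, mul_pow, pow_pow_pow_eq_self hF]
  ring

theorem image_mul_subset_traceZeroSet {c u : F} (hu : u ∈ traceZeroSet s c) :
    (· * u) '' fixedUnits F s ⊆ traceZeroSet s c := by
  obtain ⟨hu0, huV, hg⟩ := mem_traceZeroSet_iff.1 hu
  rintro _ ⟨l, ⟨hl, hl0⟩, rfl⟩
  exact mem_traceZeroSet_iff.2 ⟨mul_ne_zero hl0 hu0, by rw [trFE_mul_of_pow_eq hl, huV, mul_zero],
    by rw [traceForm_mul hl, hg, mul_zero]⟩

end TraceForm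

section Cases

variable {F : Type*} [Field F] [CharP F 2] [Fintype F] {s : ℕ}

theorem traceZeroSet_eq_image_of_trFE_eq_zero {c : F} (hc : c ≠ 0) (htc : trFE s c = 0) :
    ∃ α ≠ 0, traceZeroSet s c = (· * α) '' fixedUnits F s := by
  obtain ⟨α, rfl⟩ := FiniteField.isSquare_of_char_two (ringChar.eq F 2) c
  have hα0 : α ≠ 0 := by rintro rfl; simp at hc
  have hα2 : α ^ 2 = α * α := sq α
  have hαV : trFE s α = 0 := by rw [← pow_eq_zero_iff two_ne_zero, ← trFE_sq, hα2, htc]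
  refine ⟨α, hα0, Set.Subset.antisymm (fun u hu => ?_) (image_mul_subset_traceZeroSet ?_)⟩
  · obtain ⟨hu0, huV, hg⟩ := mem_traceZeroSet_iff.1 hu
    rw [traceForm_eq_sq hα2 htc huV, pow_eq_zero_iff two_ne_zero, polar_eq_zero_iff hα0] at hg
    exact ⟨u * α⁻¹, ⟨hg, by simp [hu0, hα0]⟩, inv_mul_cancel_right₀ hα0 u⟩
  · refine mem_traceZeroSet_iff.2 ⟨hα0, hαV, ?_⟩
    rw [traceForm_eq_sq hα2 htc hαV, (polar_eq_zero_iff hα0).2 (by simp [hα0]),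
      zero_pow two_ne_zero]

variable (hF : Fintype.card F = 2 ^ (3 * s))
include hF

theorem exists_mem_traceZeroSet_mul_inv_notMem (hs : s ≠ 0) {c u : F} (htc : trFE s c ≠ 0)
    (hu : u ∈ traceZeroSet s c) : ∃ w ∈ traceZeroSet s c, w * u⁻¹ ∉ fixedSubfield F s := by
  obtain ⟨hu0, huV, hgu⟩ := mem_traceZeroSet_iff.1 hu
  obtain ⟨v, hvV, hvu⟩ := exists_trFE_eq_zero_mul_inv_notMem hF hs hu0
  set b := u * v ^ 2 ^ s + u ^ 2 ^ s * v
  have hb : b ≠ 0 := mt (polar_eq_zero_iff hu0).1 hvu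
  -- `g(t u + v) = t² g(u) + g(v) + t Tr(c) b` with `g(u) = 0`, which this `t` makes vanish.
  set t := traceForm s c v * (trFE s c * b)⁻¹
  have ht : t ∈ fixedSubfield F s := mul_mem (traceForm_mem_fixedSubfield hF c v)
    (inv_mem (mul_mem (trFE_mem_fixedSubfield hF c) (polar_mem_fixedSubfield huV hvV)))
  have htu : trFE s (t * u) = 0 := by rw [trFE_mul_of_pow_eq ht, huV, mul_zero]
  have hwu : (t * u + v) * u⁻¹ ∉ fixedSubfield F s := by
    intro h
    refine hvu ?_
    rw [show v * u⁻¹ = (t * u + v) * u⁻¹ - t by field_simp; ring]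
    exact sub_mem h ht
  refine ⟨t * u + v, mem_traceZeroSet_iff.2 ⟨?_, ?_, ?_⟩, hwu⟩
  · rintro h
    exact hwu (by rw [h, zero_mul]; exact zero_mem _)
  · rw [trFE_add, htu, hvV, add_zero]
  · have hpolar : t * u * v ^ 2 ^ s + (t * u) ^ 2 ^ s * v = t * b := by
      rw [mul_pow, mem_fixedSubfield.1 ht]
      ring
    rw [traceForm_add htu hvV, traceForm_mul ht, hgu, hpolar,
      show trFE s c * (t * b) = traceForm s c v by simp only [t]; field_simp]
    linear_combination traceForm s c v * CharTwo.two_eq_zero (R := F)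

theorem ncard_traceZeroSet_eq_iff (hs : s ≠ 0) {c : F} (hc : c ≠ 0) :
    (traceZeroSet s c).ncard = (fixedUnits F s).ncard ↔ trFE s c = 0 := by
  refine ⟨fun h => ?_, fun htc => ?_⟩
  · by_contra htc
    have hE : 0 < (fixedUnits F s).ncard := (Set.ncard_pos).2 ⟨1, one_mem _, one_ne_zero⟩
    obtain ⟨u, hu⟩ := Set.nonempty_of_ncard_ne_zero (s := traceZeroSet s c) (by omega)
    obtain ⟨w, hw, hwu⟩ := exists_mem_traceZeroSet_mul_inv_notMem hF hs htc hu
    have hu0 := (mem_traceZeroSet_iff.1 hu).1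
    have hle := Set.ncard_le_ncard (Set.union_subset (image_mul_subset_traceZeroSet hu)
      (image_mul_subset_traceZeroSet hw))
    rw [Set.ncard_union_eq (disjoint_image_mul_fixedUnits hu0 hwu), ncard_image_mul_fixedUnits hu0,
      ncard_image_mul_fixedUnits (mem_traceZeroSet_iff.1 hw).1] at hle
    omega
  · obtain ⟨α, hα0, h⟩ := traceZeroSet_eq_image_of_trFE_eq_zero hc htc
    rw [h, ncard_image_mul_fixedUnits hα0]

end Cases

theorem isPrimitiveRoot_of_forall_eq_pow {F : Type*} [Field F] [Fintype F]
    (hF : 2 < Fintype.card F) {ω : F} (hω : ∀ x : F, x ≠ 0 → ∃ n : ℕ, x = ω ^ n) :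
    IsPrimitiveRoot ω (Fintype.card F - 1) := by
  classical
  have hω0 : ω ≠ 0 := by
    rintro rfl
    have hsub : (Finset.univ : Finset F) ⊆ {0, 1} := fun x _ => by
      rcases eq_or_ne x 0 with rfl | hx
      · simp
      · obtain ⟨n, rfl⟩ := hω x hx
        rcases n with _ | n <;> simp
    have := (Finset.card_le_card hsub).trans Finset.card_le_two
    simp only [Finset.card_univ] at this
    omega
  rw [IsPrimitiveRoot.iff_orderOf, ← Units.val_mk0 hω0, orderOf_units, ← Fintype.card_units,
    ← Nat.card_eq_fintype_card]
  refine orderOf_eq_card_of_forall_mem_zpowers fun x => ?_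
  obtain ⟨n, hn⟩ := hω x x.ne_zero
  exact ⟨n, Units.ext (by simp [hn])⟩

theorem Mof_mul (s : ℕ) : Mof s * (2 ^ s - 1) = 2 ^ (3 * s) - 1 := by
  have h1 : 1 ≤ 2 ^ s := Nat.one_le_two_pow
  have h3 : 1 ≤ 2 ^ (3 * s) := Nat.one_le_two_pow
  zify [h1, h3]
  ring

section Exponents

variable {F : Type*} [Field F] {s : ℕ} (hs : s ≠ 0) {ω : F}
  (hω : IsPrimitiveRoot ω (2 ^ (3 * s) - 1))
include hs hω

theorem ne_zero_of_isPrimitiveRoot : ω ≠ 0 :=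
  hω.ne_zero (Nat.sub_ne_zero_of_lt (Nat.one_lt_two_pow (by omega)))

variable [CharP F 2]

theorem zpow_mem_fixedSubfield_iff (n : ℤ) :
    ω ^ n ∈ fixedSubfield F s ↔ (n : ZMod (Mof s)) = 0 := by
  have hq : ((2 ^ s - 1 : ℕ) : ℤ) ≠ 0 := by
    have := Nat.one_lt_two_pow hs; omega
  rw [mem_fixedSubfield_iff_pow_sub_one (zpow_ne_zero n (ne_zero_of_isPrimitiveRoot hs hω)),
    ← zpow_natCast, ← zpow_mul, hω.zpow_eq_one_iff_dvd, ZMod.intCast_zmod_eq_zero_iff_dvd,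
    ← Mof_mul, Nat.cast_mul, mul_dvd_mul_iff_right hq]

theorem ncard_fixedUnits : (fixedUnits F s).ncard = 2 ^ s - 1 := by
  have hq : 0 < 2 ^ s - 1 := Nat.sub_pos_of_lt (Nat.one_lt_two_pow hs)
  have hζ : IsPrimitiveRoot (ω ^ Mof s) (2 ^ s - 1) :=
    hω.pow (Nat.sub_pos_of_lt (Nat.one_lt_two_pow (by omega))) (Mof_mul s).symm
  rw [← hζ.card_nthRootsFinset, ← Set.ncard_coe_finset, nthRootsFinset_toSet hq]
  congr 1
  ext x
  refine ⟨fun hx => (mem_fixedSubfield_iff_pow_sub_one hx.2).1 hx.1, fun hx => ?_⟩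
  have hx0 : x ≠ 0 := by rintro rfl; simp [zero_pow hq.ne'] at hx
  exact ⟨(mem_fixedSubfield_iff_pow_sub_one hx0).2 hx, hx0⟩

theorem trFE_zpow_eq_zero_iff {m n : ℤ} (h : (m : ZMod (Mof s)) = n) :
    trFE s (ω ^ m) = 0 ↔ trFE s (ω ^ n) = 0 := by
  have hω0 := ne_zero_of_isPrimitiveRoot hs hω
  have hmem : ω ^ (m - n) ∈ fixedSubfield F s :=
    (zpow_mem_fixedSubfield_iff hs hω _).2 (by push_cast; rw [h, sub_self])
  rw [show ω ^ m = ω ^ (m - n) * ω ^ n by rw [← zpow_add₀ hω0, sub_add_cancel],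
    trFE_mul_eq_zero_iff hmem (zpow_ne_zero _ hω0)]

theorem eq_of_mul_pow_val_eq {l m : F} (hl : l ∈ fixedUnits F s) (hm : m ∈ fixedUnits F s)
    {i j : ZMod (Mof s)} (h : l * ω ^ i.val = m * ω ^ j.val) : i = j := by
  have hω0 := ne_zero_of_isPrimitiveRoot hs hω
  have hmem : ω ^ ((i.val : ℤ) - j.val) ∈ fixedSubfield F s := by
    have hl0 := (mem_fixedUnits.1 hl).2
    rw [show ω ^ ((i.val : ℤ) - j.val) = m * l⁻¹ by
      rw [zpow_sub₀ hω0, zpow_natCast, zpow_natCast]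
      field_simp
      linear_combination h]
    exact mul_mem hm.1 (inv_mem hl.1)
  rw [zpow_mem_fixedSubfield_iff hs hω] at hmem
  simpa [sub_eq_zero] using hmem

theorem mul_pow_val_mem_traceZeroSet_iff {l : F} (hl : l ∈ fixedUnits F s) (a i : ZMod (Mof s)) :
    l * ω ^ i.val ∈ traceZeroSet s (ω ^ a.val) ↔
      trFE s (ω ^ i.val) = 0 ∧ trFE s (ω ^ (a - i).val) = 0 := by
  have hω0 := ne_zero_of_isPrimitiveRoot hs hω
  obtain ⟨hlE, hl0⟩ := mem_fixedUnits.1 hl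
  have key : ω ^ a.val * (l * ω ^ i.val)⁻¹ = l⁻¹ * ω ^ ((a.val : ℤ) - i.val) := by
    rw [zpow_sub₀ hω0, zpow_natCast, zpow_natCast]
    field_simp
  have hcast : (((a.val : ℤ) - i.val : ℤ) : ZMod (Mof s)) = (((a - i).val : ℕ) : ℤ) := by
    simp
  simp only [traceZeroSet, Set.mem_ofPred_eq, key, trFE_mul_eq_zero_iff hlE hl0,
    trFE_mul_eq_zero_iff (inv_mem hlE) (inv_ne_zero hl0), trFE_zpow_eq_zero_iff hs hω hcast,
    zpow_natCast, ne_eq, mul_eq_zero, hl0, pow_ne_zero _ hω0, or_self, not_false_eq_true, true_and]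

variable [Fintype F] (hF : Fintype.card F = 2 ^ (3 * s))
include hF

theorem exists_eq_mul_pow_val {x : F} (hx : x ≠ 0) :
    ∃ i : ZMod (Mof s), ∃ l ∈ fixedUnits F s, x = l * ω ^ i.val := by
  have hω0 := ne_zero_of_isPrimitiveRoot hs hω
  have : NeZero (2 ^ (3 * s) - 1) := ⟨Nat.sub_ne_zero_of_lt (Nat.one_lt_two_pow (by omega))⟩
  obtain ⟨n, -, rfl⟩ := hω.eq_pow_of_pow_eq_one (hF ▸ FiniteField.pow_card_sub_one_eq_one x hx)
  refine ⟨n, ω ^ ((n : ℤ) - (n : ZMod (Mof s)).val),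
    ⟨(zpow_mem_fixedSubfield_iff hs hω _).2 (by
      simp only [Int.cast_sub, Int.cast_natCast, ZMod.natCast_zmod_val, sub_self]),
    zpow_ne_zero _ hω0⟩, ?_⟩
  rw [← zpow_natCast ω (ZMod.val _), ← zpow_natCast, ← zpow_add₀ hω0, sub_add_cancel]

theorem traceZeroSet_pow_val_eq_image (a : ZMod (Mof s)) :
    traceZeroSet s (ω ^ a.val) = (fun p : ZMod (Mof s) × F => p.2 * ω ^ p.1.val) ''
      ({i | trFE s (ω ^ i.val) = 0 ∧ trFE s (ω ^ (a - i).val) = 0} ×ˢ fixedUnits F s) := by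
  ext u
  constructor
  · intro hu
    obtain ⟨i, l, hl, rfl⟩ := exists_eq_mul_pow_val hs hω hF hu.1
    exact ⟨(i, l), ⟨(mul_pow_val_mem_traceZeroSet_iff hs hω hl a i).1 hu, hl⟩, rfl⟩
  · rintro ⟨⟨i, l⟩, ⟨hi, hl⟩, rfl⟩
    exact (mul_pow_val_mem_traceZeroSet_iff hs hω hl a i).2 hi

theorem ncard_traceZeroSet_pow_val (a : ZMod (Mof s)) :
    (traceZeroSet s (ω ^ a.val)).ncard =
      {i : ZMod (Mof s) | trFE s (ω ^ i.val) = 0 ∧ trFE s (ω ^ (a - i).val) = 0}.ncard *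
        (2 ^ s - 1) := by
  rw [traceZeroSet_pow_val_eq_image hs hω hF, Set.InjOn.ncard_image, Set.ncard_prod,
    ncard_fixedUnits hs hω]
  rintro ⟨i, l⟩ ⟨-, hl⟩ ⟨j, m⟩ ⟨-, hm⟩ h
  obtain rfl := eq_of_mul_pow_val_eq hs hω hl hm h
  exact Prod.ext rfl (mul_right_cancel₀ (pow_ne_zero _ (ne_zero_of_isPrimitiveRoot hs hω)) h)

theorem mem_T1_iff (i : ZMod (Mof s)) : i ∈ T1 s ω ↔ trFE s (ω ^ i.val) = 0 := by
  rw [T1, Set.mem_ofPred_eq, ncard_Sa hF, zpow_natCast, ← ncard_fixedUnits hs hω,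
    ncard_traceZeroSet_eq_iff hF hs (pow_ne_zero _ (ne_zero_of_isPrimitiveRoot hs hω))]

theorem ncard_T1_add_eq_mul (a : ZMod (Mof s)) :
    {p : ZMod (Mof s) × ZMod (Mof s) | p.1 ∈ T1 s ω ∧ p.2 ∈ T1 s ω ∧ p.1 + p.2 = a}.ncard *
      (2 ^ s - 1) = (Sa s ω (a.val : ℤ)).ncard := by
  have hpairs : {p : ZMod (Mof s) × ZMod (Mof s) | p.1 ∈ T1 s ω ∧ p.2 ∈ T1 s ω ∧ p.1 + p.2 = a} =
      (fun i => (i, a - i)) '' {i | trFE s (ω ^ i.val) = 0 ∧ trFE s (ω ^ (a - i).val) = 0} := by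
    ext ⟨i, j⟩
    simp only [mem_T1_iff hs hω hF, Set.mem_ofPred_eq, Set.mem_image, Prod.mk.injEq]
    constructor
    · rintro ⟨hi, hj, rfl⟩
      exact ⟨i, ⟨hi, by rwa [add_sub_cancel_left]⟩, rfl, by rw [add_sub_cancel_left]⟩
    · rintro ⟨i, hi, rfl, rfl⟩
      exact ⟨hi.1, hi.2, add_sub_cancel _ _⟩
  rw [hpairs, Set.ncard_image_of_injective _ fun i j h => (Prod.ext_iff.1 h).1, ncard_Sa hF,
    zpow_natCast, ncard_traceZeroSet_pow_val hs hω hF]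

end Exponents

end TraceCyclotomy

theorem statement6 (s : ℕ) (hs : 1 ≤ s) (F : Type*) [Field F] [Fintype F]
    (hF : Fintype.card F = 2 ^ (3 * s)) (ω : F)
    (hω : ∀ x : F, x ≠ 0 → ∃ n : ℕ, x = ω ^ n) :
    ∀ a : ZMod (Mof s),
      (a ∈ T1 s ω →
        {p : ZMod (Mof s) × ZMod (Mof s) | p.1 ∈ T1 s ω ∧ p.2 ∈ T1 s ω ∧ p.1 + p.2 = a}.ncard = 1) ∧
      (a ∈ T2 s ω →
        {p : ZMod (Mof s) × ZMod (Mof s) | p.1 ∈ T1 s ω ∧ p.2 ∈ T1 s ω ∧ p.1 + p.2 = a}.ncard = 2) ∧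
      (a ∈ T3 s ω →
        {p : ZMod (Mof s) × ZMod (Mof s) | p.1 ∈ T1 s ω ∧ p.2 ∈ T1 s ω ∧ p.1 + p.2 = a}.ncard = 0) := by
  intro a
  have : CharP F 2 := charP_of_card_eq_prime_pow hF
  have hs0 : s ≠ 0 := by omega
  have hprim : IsPrimitiveRoot ω (2 ^ (3 * s) - 1) :=
    hF ▸ TraceCyclotomy.isPrimitiveRoot_of_forall_eq_pow (by
      rw [hF]
      have := Nat.pow_le_pow_right (n := 2) two_pos (show 3 ≤ 3 * s by omega)
      omega) hω
  have hq : 0 < 2 ^ s - 1 := Nat.sub_pos_of_lt (Nat.one_lt_two_pow hs0)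
  have key := TraceCyclotomy.ncard_T1_add_eq_mul hs0 hprim hF a
  refine ⟨fun h => ?_, fun h => ?_, fun h => ?_⟩ <;>
    rw [show (Sa s ω (a.val : ℤ)).ncard = _ from h] at key
  · exact Nat.eq_of_mul_eq_mul_right hq (key.trans (one_mul _).symm)
  · exact Nat.eq_of_mul_eq_mul_right hq key
  · exact (Nat.mul_eq_zero.1 key).resolve_right hq.ne'
end
end

section
/- The sets R_0, R_1, R_2, R_3 partition F and form a three-class translation association scheme on the additive group of F: there exist natural numbers p^m_{k,l} for 0 ≤ k, l, m ≤ 3 such that for all k, l, m and every d ∈ R_m, the number of z ∈ F with z ∈ R_k and d + z ∈ R_l equals p^m_{k,l} (note that in characteristic 2 one has d − z = d + z, so the relations are symmetric). -/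
noncomputable section

open scoped BigOperators

/-!
Write `q = 2 ^ s`, `Tr = trFE s`, `Q u = Tr (u ^ (q + 1))` and `ψ x = (-1) ^ Tr_{F/𝔽₂}(x)`.
`Q` is a quadratic form over `E` with polar form `B u v = Tr (u ^ q * v + u * v ^ q)`, and
`Q (u + a) = Q u + a ^ 2` for `a ∈ E`, so every coset of `E` contains exactly one zero of `Q`.
Hence `S_x = {u ≠ 0 | Q u = 0 ∧ Tr (x * u) = 0}` has `q - 1` elements when `Tr x = 0`; when
`Tr x ≠ 0`, `E` is a complement of the plane `Tr (x * u) = 0`, on which `B` is therefore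
nondegenerate, so `S_x` is empty or the union of two punctured lines. Sorting `x ≠ 0` by `|S_x|`
gives `R_1 = ker Tr \ {0}`, `R_2` and `R_3`; the generator `ω` plays no role because `S_x` only
depends on `x` modulo `E^× = ⟨ω ^ M⟩`.

For the intersection numbers, `|F| · #{z ∈ R_k | d + z ∈ R_l} = ∑_c ψ(c d) ψ(c R_k) ψ(c R_l)`.
The sums `ψ(c R_k)` are constant on the dual classes `{0}`, `E^×`, `Z = {Q = 0} \ {0}` and the
rest: for `k = 1` by orthogonality on `ker Tr`, and for `k = 2, 3` because they are determined by
the relations `∑_k ψ(c R_k) = |F| [c = 0]` and `∑_k z_k ψ(c R_k) = |F| [c ∈ Z]`, where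
`z_k = ψ(x Z)` for `x ∈ R_k` is read off from `|S_x|`. Dually, the sum of `ψ(c d)` over each dual
class only depends on the class of `d`, and therefore so does the count.
-/

open scoped Classical
open Finset Polynomial

attribute [local instance] ZMod.algebra

lemma card_filter_isRoot_le {K : Type*} [Field K] [Fintype K] {p : K[X]} (hp : p ≠ 0) :
    #{x | p.IsRoot x} ≤ p.natDegree :=
  card_le_degree_of_subset_roots fun x hx => (mem_roots hp).2 (by simpa using hx)

lemma sum_addChar_eq_zero_of_addClosed {A R : Type*} [AddCommGroup A] [CommRing R] [IsDomain R]
    (φ : AddChar A R) {G : Finset A} (hG : ∀ a ∈ G, ∀ b ∈ G, a + b ∈ G) {g : A} (hg : g ∈ G)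
    (hφ : φ g ≠ 1) : ∑ x ∈ G, φ x = 0 := by
  have hinj : Function.Injective (· + g) := add_left_injective g
  have himg : G.image (· + g) = G :=
    eq_of_subset_of_card_le (image_subset_iff.2 fun x hx => hG x hx g hg)
      (card_image_of_injective _ hinj).ge
  have h : ∑ x ∈ G, φ x = (∑ x ∈ G, φ x) * φ g := by
    conv_lhs => rw [← himg, sum_image fun x _ y _ h => hinj h]
    simp [AddChar.map_add_eq_mul, sum_mul]
  have : (∑ x ∈ G, φ x) * (φ g - 1) = 0 := by rw [mul_sub, ← h]; ring
  exact (mul_eq_zero.1 this).resolve_right (sub_ne_zero.2 hφ)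

lemma sum_mul_eq_of_sum_fiber_eq {α ι R : Type*} [Fintype α] [Fintype ι] [DecidableEq ι]
    [CommRing R] (cls : α → ι) {f g g' : α → R} (hf : ∀ a b, cls a = cls b → f a = f b)
    (hg : ∀ j, ∑ a with cls a = j, g a = ∑ a with cls a = j, g' a) :
    ∑ a, g a * f a = ∑ a, g' a * f a := by
  rw [← sum_fiberwise univ cls, ← sum_fiberwise univ cls]
  refine sum_congr rfl fun j _ => ?_
  rcases ({a | cls a = j} : Finset α).eq_empty_or_nonempty with h | ⟨a₀, ha₀⟩
  · simp [h]
  have hfa (a) (ha : a ∈ ({a | cls a = j} : Finset α)) : f a = f a₀ :=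
    hf a a₀ ((mem_filter.1 ha).2.trans (mem_filter.1 ha₀).2.symm)
  calc ∑ a with cls a = j, g a * f a = (∑ a with cls a = j, g a) * f a₀ := by
        rw [sum_mul]; exact sum_congr rfl fun a ha => by rw [hfa a ha]
    _ = ∑ a with cls a = j, g' a * f a := by
        rw [hg, sum_mul]; exact sum_congr rfl fun a ha => by rw [hfa a ha]

namespace ConicScheme

def psiChar (F : Type*) [Field F] [Algebra (ZMod 2) F] : AddChar F ℤ where
  toFun := psi F
  map_zero_eq_one' := by simp [psi]
  map_add_eq_mul' x y := by
    simp only [psi, map_add]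
    generalize Algebra.trace (ZMod 2) F x = a
    generalize Algebra.trace (ZMod 2) F y = b
    revert a b
    decide

variable {F : Type*} [Field F] {s : ℕ}

local notation "σ" => iterateFrobenius F 2 s

def quadQ (s : ℕ) (u : F) : F := trFE s (u ^ (2 ^ s + 1))

def polarB (s : ℕ) (u v : F) : F := trFE s (u * v ^ 2 ^ s + v * u ^ 2 ^ s)

lemma trFE_zero : trFE s (0 : F) = 0 := by simp [trFE]

section CharTwo

variable [CharP F 2]

lemma trFE_eq (x : F) : trFE s x = x + σ x + σ (σ x) := by
  simp only [trFE, iterateFrobenius_def, ← pow_mul, ← pow_add, two_mul]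

lemma trFE_add (x y : F) : trFE s (x + y) = trFE s x + trFE s y := by
  simp only [trFE_eq, map_add]; ring

lemma trFE_mul_of_frob_eq {a : F} (ha : σ a = a) (x : F) : trFE s (a * x) = a * trFE s x := by
  simp only [trFE_eq, map_mul, ha]; ring

lemma trFE_of_frob_eq {a : F} (ha : σ a = a) : trFE s a = a := by
  rw [trFE_eq, ha, ha, add_assoc, CharTwo.add_self_eq_zero, add_zero]

lemma trFE_one : trFE s (1 : F) = 1 := trFE_of_frob_eq (map_one _)

lemma eq_zero_of_trFE_mul_eq_zero {c : F} (h : ∀ v, trFE s (c * v) = 0) : c = 0 := by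
  by_contra hc
  simpa [mul_inv_cancel₀ hc, trFE_one] using h c⁻¹

lemma quadQ_eq (u : F) : quadQ s u = trFE s (u * σ u) := by
  rw [quadQ, pow_succ', iterateFrobenius_def]

lemma polarB_eq (u v : F) : polarB s u v = trFE s (u * σ v + v * σ u) := rfl

lemma quadQ_add (u v : F) : quadQ s (u + v) = quadQ s u + quadQ s v + polarB s u v := by
  simp only [quadQ_eq, polarB_eq, map_add, ← trFE_add]
  ring_nf

lemma polarB_comm (u v : F) : polarB s u v = polarB s v u := by
  rw [polarB_eq, polarB_eq, add_comm]

lemma polarB_self (u : F) : polarB s u u = 0 := by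
  rw [polarB_eq, CharTwo.add_self_eq_zero, trFE_zero]

lemma polarB_add_right (u v w : F) : polarB s u (v + w) = polarB s u v + polarB s u w := by
  simp only [polarB_eq, map_add, ← trFE_add]
  ring_nf

lemma polarB_smul_right {a : F} (ha : σ a = a) (u v : F) :
    polarB s u (a * v) = a * polarB s u v := by
  simp only [polarB_eq, map_mul, ha, ← trFE_mul_of_frob_eq ha]
  ring_nf

lemma polarB_smul_left {a : F} (ha : σ a = a) (u v : F) :
    polarB s (a * u) v = a * polarB s u v := by
  rw [polarB_comm, polarB_smul_right ha, polarB_comm]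

lemma quadQ_smul {a : F} (ha : σ a = a) (u : F) : quadQ s (a * u) = a ^ 2 * quadQ s u := by
  have ha2 : σ (a ^ 2) = a ^ 2 := by rw [map_pow, ha]
  simp only [quadQ_eq, map_mul, ha, ← trFE_mul_of_frob_eq ha2]
  ring_nf

lemma quadQ_of_frob_eq {a : F} (ha : σ a = a) : quadQ s a = a ^ 2 := by
  have ha2 : σ (a ^ 2) = a ^ 2 := by rw [map_pow, ha]
  rw [quadQ_eq, ha, ← sq, trFE_of_frob_eq ha2]

lemma polarB_left_coord {θ θ' a b : F} (hB : polarB s θ θ' = 1) (ha : σ a = a) (hb : σ b = b) :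
    polarB s θ (a * θ + b * θ') = b := by
  rw [polarB_add_right, polarB_smul_right ha, polarB_smul_right hb, polarB_self, hB, mul_zero,
    mul_one, zero_add]

lemma polarB_right_coord {θ θ' a b : F} (hB : polarB s θ θ' = 1) (ha : σ a = a) (hb : σ b = b) :
    polarB s θ' (a * θ + b * θ') = a := by
  rw [polarB_add_right, polarB_smul_right ha, polarB_smul_right hb, polarB_self, polarB_comm, hB,
    mul_zero, mul_one, add_zero]

lemma quadQ_coord {θ θ' a b : F} (hB : polarB s θ θ' = 1) (ha : σ a = a) (hb : σ b = b)
    (hθ : quadQ s θ = 0) (hθ' : quadQ s θ' = 0) : quadQ s (a * θ + b * θ') = a * b := by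
  rw [quadQ_add, quadQ_smul ha, quadQ_smul hb, polarB_smul_left ha, polarB_smul_right hb, hθ, hθ',
    hB]
  ring

lemma psiSum_coe (c : F) (S : Finset F) :
    psiSum F c (S : Set F) = ∑ x ∈ S, psiChar F (c * x) :=
  finsum_mem_coe_finset _ _

end CharTwo

variable [Fintype F]

lemma one_le_of_card_eq (hF : Fintype.card F = 2 ^ (3 * s)) : 1 ≤ s := by
  by_contra! h
  have := Fintype.one_lt_card (α := F)
  simp_all

lemma two_le_two_pow_of_card_eq (hF : Fintype.card F = 2 ^ (3 * s)) : 2 ≤ 2 ^ s :=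
  Nat.le_self_pow (by have := one_le_of_card_eq hF; omega) 2

lemma ne_zero_of_forall_eq_pow (hF : Fintype.card F = 2 ^ (3 * s)) {ω : F}
    (hω : ∀ x : F, x ≠ 0 → ∃ n : ℕ, x = ω ^ n) : ω ≠ 0 := by
  rintro rfl
  have hsub : (univ : Finset F) ⊆ {0, 1} := fun x _ => by
    rcases eq_or_ne x 0 with rfl | hx
    · simp
    obtain ⟨n, rfl⟩ := hω x hx
    rcases n with _ | n <;> simp
  have h := (card_le_card hsub).trans card_le_two
  rw [card_univ, hF] at h
  have := Nat.pow_le_pow_right two_pos (show 3 ≤ 3 * s by have := one_le_of_card_eq hF; omega)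
  omega

def subfieldE (s : ℕ) (F : Type*) [Field F] [Fintype F] : Finset F := {x | x ^ 2 ^ s = x}

def hyperplane (s : ℕ) (x : F) : Finset F := {u | trFE s (x * u) = 0}

def quadZeros (s : ℕ) (F : Type*) [Field F] [Fintype F] : Finset F :=
  {u | u ≠ 0 ∧ quadQ s u = 0}

def hypZeros (s : ℕ) (x : F) : Finset F := {u ∈ quadZeros s F | trFE s (x * u) = 0}

lemma mem_hyperplane {x u : F} : u ∈ hyperplane s x ↔ trFE s (x * u) = 0 := by
  simp [hyperplane]

lemma mem_quadZeros {u : F} : u ∈ quadZeros s F ↔ u ≠ 0 ∧ quadQ s u = 0 := by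
  simp [quadZeros]

lemma mem_hypZeros {x u : F} :
    u ∈ hypZeros s x ↔ (u ≠ 0 ∧ quadQ s u = 0) ∧ trFE s (x * u) = 0 := by
  simp [hypZeros, mem_quadZeros]

lemma hypZeros_zero : hypZeros s (0 : F) = quadZeros s F := by
  simp [hypZeros, trFE_zero]

lemma hypZeros_eq_erase (x : F) :
    hypZeros s x = ({u ∈ hyperplane s x | quadQ s u = 0} : Finset F).erase 0 := by
  ext u; simp [mem_hypZeros, mem_hyperplane]; tauto

lemma Sa_eq (ω : F) (a : ℤ) : Sa s ω a = hypZeros s (ω ^ a) := by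
  ext u; simp [Sa, mem_hypZeros, quadQ, and_assoc]

lemma card_subfieldE_le (hs : 1 ≤ s) : #(subfieldE s F) ≤ 2 ^ s := by
  have hdeg := FiniteField.X_pow_card_sub_X_natDegree_eq F (Nat.one_lt_two_pow (by omega : s ≠ 0))
  have hp : (X ^ 2 ^ s - X : F[X]) ≠ 0 := ne_zero_of_natDegree_gt (n := 0) (by simp [hdeg])
  refine le_trans (card_le_card fun x hx => ?_) (hdeg ▸ card_filter_isRoot_le hp)
  simpa [sub_eq_zero, subfieldE] using hx

lemma card_hyperplane_one_le (hs : 1 ≤ s) : #(hyperplane s (1 : F)) ≤ 2 ^ (2 * s) := by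
  have h1 : 2 ^ s < 2 ^ (2 * s) := Nat.pow_lt_pow_right (by norm_num) (by omega)
  have hdeg : (X ^ 2 ^ (2 * s) + X ^ 2 ^ s + X : F[X]).natDegree = 2 ^ (2 * s) := by
    have := Nat.one_lt_two_pow (by omega : s ≠ 0)
    compute_degree!
    · simp [show 2 * s ≠ s by omega, show 1 ≠ 2 ^ (2 * s) by omega]
    all_goals omega
  have hp : (X ^ 2 ^ (2 * s) + X ^ 2 ^ s + X : F[X]) ≠ 0 :=
    ne_zero_of_natDegree_gt (n := 0) (by simp [hdeg])
  refine le_trans (card_le_card fun x hx => ?_) (hdeg ▸ card_filter_isRoot_le hp)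
  simp only [mem_hyperplane, one_mul, trFE] at hx
  simp only [mem_filter, mem_univ, true_and, IsRoot.def, eval_add, eval_pow, eval_X]
  linear_combination hx

def classOf (s : ℕ) (x : F) : Fin 4 :=
  if x = 0 then 0 else if #(hypZeros s x) = 2 ^ s - 1 then 1
  else if #(hypZeros s x) = 2 * (2 ^ s - 1) then 2 else 3

def assocClass (s : ℕ) (F : Type*) [Field F] [Fintype F] (k : Fin 4) : Finset F :=
  {x | classOf s x = k}

def dualClassOf (s : ℕ) (c : F) : Fin 4 :=
  if c = 0 then 0 else if c ∈ subfieldE s F then 1 else if quadQ s c = 0 then 2 else 3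

lemma classOf_eq_zero_iff {x : F} : classOf s x = 0 ↔ x = 0 := by
  unfold classOf; split_ifs <;> simp_all

lemma dualClassOf_eq_zero_iff {c : F} : dualClassOf s c = 0 ↔ c = 0 := by
  unfold dualClassOf; split_ifs <;> simp_all

lemma assocClass_zero : assocClass s F 0 = {0} := by
  ext x; simp [assocClass, classOf_eq_zero_iff]

variable [CharP F 2]

lemma frob_frob_frob (hF : Fintype.card F = 2 ^ (3 * s)) (x : F) : σ (σ (σ x)) = x := by
  simp only [iterateFrobenius_def, ← pow_mul, ← pow_add]
  rw [show s + s + s = 3 * s by ring, ← hF, FiniteField.pow_card]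

lemma frob_eq_of_frob_frob_eq (hF : Fintype.card F = 2 ^ (3 * s)) {b : F} (h : σ (σ b) = b) :
    σ b = b :=
  (congrArg σ h).symm.trans (frob_frob_frob hF b)

lemma frob_trFE (hF : Fintype.card F = 2 ^ (3 * s)) (x : F) : σ (trFE s x) = trFE s x := by
  simp only [trFE_eq, map_add, frob_frob_frob hF]; ring

lemma trFE_frob (hF : Fintype.card F = 2 ^ (3 * s)) (x : F) : trFE s (σ x) = trFE s x := by
  simp only [trFE_eq, frob_frob_frob hF]; ring

lemma trFE_mul_frob_add (hF : Fintype.card F = 2 ^ (3 * s)) (c y : F) :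
    trFE s (c * (σ y + y)) = trFE s ((σ (σ c) + c) * y) := by
  rw [add_mul, mul_add, trFE_add, trFE_add, ← trFE_frob hF (σ (σ c) * y), map_mul,
    frob_frob_frob hF]

lemma frob_eq_of_trFE_mul_eq_zero (hF : Fintype.card F = 2 ^ (3 * s)) {b : F}
    (hb : ∀ w, trFE s w = 0 → trFE s (b * w) = 0) : σ b = b := by
  refine frob_eq_of_frob_frob_eq hF
    (CharTwo.add_eq_zero.1 (eq_zero_of_trFE_mul_eq_zero (s := s) fun y => ?_))
  rw [← trFE_mul_frob_add hF]
  exact hb _ (by rw [trFE_add, trFE_frob hF, CharTwo.add_self_eq_zero])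

lemma mem_subfieldE {x : F} : x ∈ subfieldE s F ↔ σ x = x := by
  simp [subfieldE, iterateFrobenius_def]

lemma add_mem_subfieldE {a b : F} (ha : a ∈ subfieldE s F) (hb : b ∈ subfieldE s F) :
    a + b ∈ subfieldE s F := by
  simp_all [mem_subfieldE]

lemma card_hyperplane_one_mul_card_subfieldE (hF : Fintype.card F = 2 ^ (3 * s)) :
    #(hyperplane s (1 : F)) * #(subfieldE s F) = 2 ^ (3 * s) := by
  rw [← card_product, ← hF, ← card_univ]
  refine card_nbij' (fun p => p.1 + p.2) (fun x => (x + trFE s x, trFE s x))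
    (fun _ _ => by simp) (fun x _ => ?_) (fun p hp => ?_) (fun x _ => ?_)
  · have := trFE_of_frob_eq (frob_trFE hF x)
    simp [mem_hyperplane, mem_subfieldE, frob_trFE hF, trFE_add, this, CharTwo.add_self_eq_zero]
  · simp only [coe_product, Set.mem_prod, mem_coe, mem_hyperplane, mem_subfieldE, one_mul] at hp
    simp [trFE_add, hp.1, trFE_of_frob_eq hp.2, add_assoc, CharTwo.add_self_eq_zero]
  · simp [add_assoc, CharTwo.add_self_eq_zero]

lemma card_subfieldE (hF : Fintype.card F = 2 ^ (3 * s)) : #(subfieldE s F) = 2 ^ s := by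
  have hs := one_le_of_card_eq hF
  have hH := card_hyperplane_one_le (F := F) hs
  refine le_antisymm (card_subfieldE_le hs) (not_lt.1 fun hlt => ?_)
  have := Nat.mul_lt_mul_of_le_of_lt hH hlt (Nat.two_pow_pos _)
  rw [card_hyperplane_one_mul_card_subfieldE hF, ← pow_add, show 2 * s + s = 3 * s by ring]
    at this
  exact lt_irrefl _ this

lemma card_hyperplane (hF : Fintype.card F = 2 ^ (3 * s)) {x : F} (hx : x ≠ 0) :
    #(hyperplane s x) = 2 ^ (2 * s) := by
  have hH : #(hyperplane s (1 : F)) = 2 ^ (2 * s) := by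
    have h := card_hyperplane_one_mul_card_subfieldE hF
    rw [card_subfieldE hF, show 3 * s = 2 * s + s by ring, pow_add] at h
    exact Nat.eq_of_mul_eq_mul_right (Nat.two_pow_pos s) h
  rw [← hH]
  refine card_nbij' (x * ·) (x⁻¹ * ·) (fun u hu => ?_) (fun u hu => ?_) (fun u _ => ?_)
    (fun u _ => ?_) <;> simp_all [mem_hyperplane]

/-! ### The additive character `ψ` -/

lemma psiChar_ne_one : psiChar F ≠ 1 := by
  obtain ⟨x, hx⟩ := DFunLike.ne_iff.1 (Algebra.trace_ne_zero (ZMod 2) F)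
  exact AddChar.ne_one_iff.2 ⟨x, by simpa [psiChar, psi] using hx⟩

lemma sum_psiChar_mul (y : F) :
    ∑ c : F, psiChar F (c * y) = if y = 0 then (Fintype.card F : ℤ) else 0 := by
  rw [AddChar.sum_mulShift y (AddChar.IsPrimitive.of_ne_one psiChar_ne_one)]
  split_ifs <;> simp

lemma card_mul_card_translate (A B : Finset F) (d : F) :
    (Fintype.card F : ℤ) * #{z ∈ A | d + z ∈ B} =
      ∑ c, psiChar F (c * d) * (psiSum F c A * psiSum F c B) := by
  have h (c : F) : psiChar F (c * d) * (psiSum F c A * psiSum F c B) =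
      ∑ z ∈ A, ∑ w ∈ B, psiChar F (c * (d + z + w)) := by
    rw [psiSum_coe, psiSum_coe, sum_mul_sum, mul_sum]
    refine sum_congr rfl fun z _ => ?_
    rw [mul_sum]
    refine sum_congr rfl fun w _ => ?_
    rw [← AddChar.map_add_eq_mul, ← AddChar.map_add_eq_mul]
    ring_nf
  have h' (z : F) : ∑ c, ∑ w ∈ B, psiChar F (c * (d + z + w)) =
      if d + z ∈ B then (Fintype.card F : ℤ) else 0 := by
    rw [sum_comm]
    simp only [sum_psiChar_mul, CharTwo.add_eq_zero, sum_ite_eq]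
  simp only [h]
  rw [sum_comm]
  simp only [h', sum_ite, sum_const_zero, add_zero, sum_const, nsmul_eq_mul]
  ring

lemma card_translate_eq_of_invariant {ι : Type*} [Fintype ι] [DecidableEq ι] (cls : F → ι)
    {A B : Finset F} (hA : ∀ c c', cls c = cls c' → psiSum F c A = psiSum F c' A)
    (hB : ∀ c c', cls c = cls c' → psiSum F c B = psiSum F c' B) {d d' : F}
    (hd : ∀ j, ∑ c with cls c = j, psiChar F (c * d) = ∑ c with cls c = j, psiChar F (c * d')) :
    #{z ∈ A | d + z ∈ B} = #{z ∈ A | d' + z ∈ B} := by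
  have key := sum_mul_eq_of_sum_fiber_eq cls (f := fun c => psiSum F c A * psiSum F c B)
    (fun a b h => by rw [hA a b h, hB a b h]) hd
  rw [← card_mul_card_translate, ← card_mul_card_translate] at key
  exact_mod_cast mul_left_cancel₀ (by simp) key

lemma finrank_zmod_two (hF : Fintype.card F = 2 ^ (3 * s)) :
    Module.finrank (ZMod 2) F = 3 * s := by
  have h := Module.card_eq_pow_finrank (K := ZMod 2) (V := F)
  rw [hF, ZMod.card] at h
  exact (Nat.pow_right_injective le_rfl h).symm

lemma algebraMap_trace_eq_sum_trFE_pow (hF : Fintype.card F = 2 ^ (3 * s)) (x : F) :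
    algebraMap (ZMod 2) F (Algebra.trace (ZMod 2) F x) =
      ∑ i ∈ range s, trFE s x ^ 2 ^ i := by
  rw [FiniteField.algebraMap_trace_eq_sum_pow, finrank_zmod_two hF, Nat.card_zmod,
    show 3 * s = s + s + s by ring, sum_range_add, sum_range_add, ← sum_add_distrib,
    ← sum_add_distrib]
  refine sum_congr rfl fun i _ => ?_
  simp only [trFE, add_pow_char_pow, ← pow_mul, ← pow_add]
  ring_nf

lemma psiChar_eq_one_of_trFE_eq_zero (hF : Fintype.card F = 2 ^ (3 * s)) {x : F}
    (hx : trFE s x = 0) : psiChar F x = 1 := by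
  have h := algebraMap_trace_eq_sum_trFE_pow hF x
  simp only [hx, zero_pow (pow_ne_zero _ two_ne_zero), sum_const_zero,
    FaithfulSMul.algebraMap_eq_zero_iff] at h
  simp [psiChar, psi, h]

lemma psiChar_eq_of_trFE_eq (hF : Fintype.card F = 2 ^ (3 * s)) {x y : F}
    (h : trFE s x = trFE s y) : psiChar F x = psiChar F y := by
  have hxy : trFE s (x + y) = 0 := by rw [trFE_add, h, CharTwo.add_self_eq_zero]
  rw [show x = y + (x + y) by rw [add_left_comm, CharTwo.add_self_eq_zero, add_zero],
    AddChar.map_add_eq_mul, psiChar_eq_one_of_trFE_eq_zero hF hxy, mul_one]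

lemma sum_subfieldE_psiChar (hF : Fintype.card F = 2 ^ (3 * s)) (y : F) :
    ∑ a ∈ subfieldE s F, psiChar F (y * a) = if trFE s y = 0 then 2 ^ s else 0 := by
  split_ifs with hy
  · rw [sum_congr rfl fun a ha => psiChar_eq_one_of_trFE_eq_zero hF (by
      rw [mul_comm, trFE_mul_of_frob_eq (mem_subfieldE.1 ha), hy, mul_zero])]
    simp [card_subfieldE hF]
  · obtain ⟨z, hz⟩ := AddChar.ne_one_iff.1 (psiChar_ne_one (F := F))
    have ha : trFE s z / trFE s y ∈ subfieldE s F :=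
      mem_subfieldE.2 (by simp only [map_div₀, frob_trFE hF])
    have hψ : psiChar F (y * (trFE s z / trFE s y)) = psiChar F z := by
      refine psiChar_eq_of_trFE_eq hF ?_
      rw [mul_comm, trFE_mul_of_frob_eq (mem_subfieldE.1 ha), div_mul_cancel₀ _ hy]
    exact sum_addChar_eq_zero_of_addClosed ((psiChar F).mulShift y)
      (fun a ha b hb => add_mem_subfieldE ha hb) ha (by simpa [hψ] using hz)

lemma sum_hyperplane_one_psiChar (hF : Fintype.card F = 2 ^ (3 * s)) (c : F) :
    ∑ x ∈ hyperplane s 1, psiChar F (c * x) = if c ∈ subfieldE s F then 2 ^ (2 * s) else 0 := by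
  split_ifs with hc
  · rw [sum_congr rfl fun x hx => psiChar_eq_one_of_trFE_eq_zero hF (by
      rw [trFE_mul_of_frob_eq (mem_subfieldE.1 hc), ← one_mul x, mem_hyperplane.1 hx, mul_zero])]
    simp [card_hyperplane hF one_ne_zero]
  obtain ⟨x, hxH, hx⟩ : ∃ x ∈ hyperplane s 1, psiChar F (c * x) ≠ 1 := by
    by_contra! h
    have key : (psiChar F).mulShift (σ (σ c) + c) = 1 := AddChar.eq_one_iff.2 fun y => by
      rw [AddChar.mulShift_apply, ← h (σ y + y) (by
        rw [mem_hyperplane, one_mul, trFE_add, trFE_frob hF, CharTwo.add_self_eq_zero])]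
      exact psiChar_eq_of_trFE_eq hF (trFE_mul_frob_add hF c y).symm
    have h0 : σ (σ c) + c = 0 := by
      by_contra h0
      exact AddChar.IsPrimitive.of_ne_one psiChar_ne_one h0 key
    exact hc (mem_subfieldE.2 (frob_eq_of_frob_frob_eq hF (CharTwo.add_eq_zero.1 h0)))
  exact sum_addChar_eq_zero_of_addClosed ((psiChar F).mulShift c)
    (fun a ha b hb => by simp_all [mem_hyperplane, mul_add, trFE_add]) hxH (by simpa using hx)

/-! ### Zeros of `Q` on the hyperplanes `Tr (x * u) = 0` -/

lemma frob_quadQ (hF : Fintype.card F = 2 ^ (3 * s)) (u : F) : σ (quadQ s u) = quadQ s u := by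
  rw [quadQ_eq, frob_trFE hF]

lemma frob_polarB (hF : Fintype.card F = 2 ^ (3 * s)) (u v : F) :
    σ (polarB s u v) = polarB s u v := by
  rw [polarB_eq, frob_trFE hF]

lemma polarB_of_frob_eq_right (hF : Fintype.card F = 2 ^ (3 * s)) {a : F} (ha : σ a = a)
    (u : F) : polarB s u a = 0 := by
  rw [polarB_eq, ha, trFE_add, mul_comm u, trFE_mul_of_frob_eq ha, trFE_mul_of_frob_eq ha,
    trFE_frob hF, CharTwo.add_self_eq_zero]

lemma quadQ_add_of_frob_eq (hF : Fintype.card F = 2 ^ (3 * s)) {a : F} (ha : σ a = a)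
    (u : F) : quadQ s (u + a) = quadQ s u + a ^ 2 := by
  rw [quadQ_add, quadQ_of_frob_eq ha, polarB_of_frob_eq_right hF ha, add_zero]

lemma polarB_eq_trFE_mul (hF : Fintype.card F = 2 ^ (3 * s)) (u v : F) :
    polarB s u v = trFE s ((σ u + σ (σ u)) * v) := by
  rw [polarB_eq, trFE_add, ← trFE_frob hF (u * σ v), ← trFE_frob hF (σ (u * σ v))]
  simp only [map_mul, frob_frob_frob hF, ← trFE_add]
  ring_nf

-- A point of `P` is moved to the unique zero of `Q` in its coset `v + E`, since
-- `Q (v + a) = Q v + a ^ 2`.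
lemma card_filter_quadQ_eq_zero_mul (hF : Fintype.card F = 2 ^ (3 * s)) {P : Finset F}
    (hP : ∀ u ∈ P, ∀ a ∈ subfieldE s F, u + a ∈ P) :
    #{u ∈ P | quadQ s u = 0} * 2 ^ s = #P := by
  set r : F → F := fun v => (frobeniusEquiv F 2).symm (quadQ s v)
  have hr2 (v : F) : r v ^ 2 = quadQ s v := frobeniusEquiv_symm_pow_p F 2 _
  have hrE (v : F) : r v ∈ subfieldE s F := mem_subfieldE.2
    (frobenius_inj F 2 (by simp only [frobenius_def, ← map_pow, hr2, frob_quadQ hF]))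
  rw [← card_subfieldE hF, ← card_product]
  refine card_nbij' (fun p => p.1 + p.2) (fun v => (v + r v, r v)) (fun p hp => ?_)
    (fun v hv => ?_) (fun p hp => ?_) (fun v _ => ?_)
  · simp only [mem_coe, mem_product, mem_filter] at hp
    exact hP _ hp.1.1 _ hp.2
  · simp only [mem_coe, mem_product, mem_filter]
    refine ⟨⟨hP _ hv _ (hrE v), ?_⟩, hrE v⟩
    rw [quadQ_add_of_frob_eq hF (mem_subfieldE.1 (hrE v)), hr2, CharTwo.add_self_eq_zero]
  · simp only [mem_coe, mem_product, mem_filter] at hp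
    have : r (p.1 + p.2) = p.2 := by
      simp only [r, quadQ_add_of_frob_eq hF (mem_subfieldE.1 hp.2), hp.1.2, zero_add]
      exact frobeniusEquiv_symm_apply_frobenius F 2 p.2
    simp [this, add_assoc, CharTwo.add_self_eq_zero]
  · simp [add_assoc, CharTwo.add_self_eq_zero]

lemma card_quadZeros (hF : Fintype.card F = 2 ^ (3 * s)) :
    #(quadZeros s F) = 2 ^ (2 * s) - 1 := by
  have h := card_filter_quadQ_eq_zero_mul hF (P := univ) (by simp)
  rw [card_univ, hF, show 3 * s = 2 * s + s by ring, pow_add] at h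
  have hZ : quadZeros s F = ({u | quadQ s u = 0} : Finset F).erase 0 := by
    ext u; simp [mem_quadZeros, and_comm]
  rw [hZ, card_erase_of_mem (by simp [quadQ_eq, trFE_zero]),
    Nat.eq_of_mul_eq_mul_right (Nat.two_pow_pos s) h]

lemma card_hypZeros_of_trFE_eq_zero (hF : Fintype.card F = 2 ^ (3 * s)) {x : F} (hx : x ≠ 0)
    (htr : trFE s x = 0) : #(hypZeros s x) = 2 ^ s - 1 := by
  have h := card_filter_quadQ_eq_zero_mul hF (P := hyperplane s x) fun u hu a ha => by
    rw [mem_hyperplane, mul_add, trFE_add, mem_hyperplane.1 hu, mul_comm,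
      trFE_mul_of_frob_eq (mem_subfieldE.1 ha), htr, mul_zero, zero_add]
  rw [card_hyperplane hF hx, two_mul, pow_add] at h
  rw [hypZeros_eq_erase, card_erase_of_mem (by simp [mem_hyperplane, quadQ_eq, trFE_zero]),
    Nat.eq_of_mul_eq_mul_right (Nat.two_pow_pos s) h]

lemma exists_polarB_ne_zero (hF : Fintype.card F = 2 ^ (3 * s)) {x θ : F}
    (hx : trFE s x ≠ 0) (hθ : θ ∈ hyperplane s x) (hθ0 : θ ≠ 0) :
    ∃ v ∈ hyperplane s x, polarB s θ v ≠ 0 := by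
  by_contra! h
  have hx0 : x ≠ 0 := by rintro rfl; exact hx trFE_zero
  set a := σ θ + σ (σ θ)
  have ha : σ (a / x) = a / x := frob_eq_of_trFE_mul_eq_zero hF fun w hw => by
    have := h (x⁻¹ * w) (by rwa [mem_hyperplane, ← mul_assoc, mul_inv_cancel₀ hx0, one_mul])
    rwa [polarB_eq_trFE_mul hF, ← mul_assoc, ← div_eq_mul_inv] at this
  have hax : a / x * trFE s x = 0 := by
    rw [← trFE_mul_of_frob_eq ha, div_mul_cancel₀ _ hx0, trFE_add]
    simp only [trFE_frob hF, CharTwo.add_self_eq_zero]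
  have hθE : σ θ = θ := by
    have h1 : σ θ = σ (σ θ) := CharTwo.add_eq_zero.1
      ((div_eq_zero_iff.1 ((mul_eq_zero.1 hax).resolve_right hx)).resolve_right hx0)
    exact frob_eq_of_frob_frob_eq hF ((congrArg σ h1).trans (frob_frob_frob hF θ))
  rw [mem_hyperplane, mul_comm, trFE_mul_of_frob_eq hθE] at hθ
  exact mul_ne_zero hθ0 hx hθ

lemma exists_hyperbolic_partner (hF : Fintype.card F = 2 ^ (3 * s)) {x θ : F}
    (hx : trFE s x ≠ 0) (hθ : θ ∈ hypZeros s x) :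
    ∃ θ' ∈ hypZeros s x, polarB s θ θ' = 1 := by
  obtain ⟨⟨hθ0, hQθ⟩, hθx⟩ := mem_hypZeros.1 hθ
  obtain ⟨v, hv, hβ⟩ := exists_polarB_ne_zero hF hx (mem_hyperplane.2 hθx) hθ0
  have hβE : σ (polarB s θ v)⁻¹ = (polarB s θ v)⁻¹ := by rw [map_inv₀, frob_polarB hF]
  set w := (polarB s θ v)⁻¹ * v
  have hw : polarB s θ w = 1 := by rw [polarB_smul_right hβE, inv_mul_cancel₀ hβ]
  have hQw : σ (quadQ s w) = quadQ s w := frob_quadQ hF w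
  have hB : polarB s θ (quadQ s w * θ + w) = 1 := by
    rw [polarB_add_right, polarB_smul_right hQw, polarB_self, mul_zero, zero_add, hw]
  refine ⟨quadQ s w * θ + w, mem_hypZeros.2 ⟨⟨fun h0 => ?_, ?_⟩, ?_⟩, hB⟩
  · simp [h0, polarB_eq, trFE_zero] at hB
  · rw [quadQ_add, quadQ_smul hQw, hQθ, polarB_smul_left hQw, hw]
    simp [CharTwo.add_self_eq_zero]
  · rw [mul_add, trFE_add, mul_left_comm, trFE_mul_of_frob_eq hQw, hθx, mul_zero, zero_add,
      mul_left_comm, trFE_mul_of_frob_eq hβE, mem_hyperplane.1 hv, mul_zero]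

lemma exists_eq_add_of_polarB_eq_one (hF : Fintype.card F = 2 ^ (3 * s)) {x θ θ' u : F} (hx : x ≠ 0)
    (hθ : θ ∈ hyperplane s x) (hθ' : θ' ∈ hyperplane s x) (hB : polarB s θ θ' = 1)
    (hu : u ∈ hyperplane s x) : ∃ a b : F, σ a = a ∧ σ b = b ∧ u = a * θ + b * θ' := by
  have hmaps : Set.MapsTo (fun p : F × F => p.1 * θ + p.2 * θ')
      (subfieldE s F ×ˢ subfieldE s F : Finset _) (hyperplane s x) := fun p hp => by
    simp only [coe_product, Set.mem_prod, mem_coe, mem_subfieldE] at hp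
    rw [mem_coe, mem_hyperplane, mul_add, mul_left_comm, mul_left_comm x, trFE_add,
      trFE_mul_of_frob_eq hp.1, trFE_mul_of_frob_eq hp.2, mem_hyperplane.1 hθ,
      mem_hyperplane.1 hθ', mul_zero, mul_zero, add_zero]
  have hinj : Set.InjOn (fun p : F × F => p.1 * θ + p.2 * θ')
      (subfieldE s F ×ˢ subfieldE s F : Finset _) := fun p hp q hq h => by
    simp only [coe_product, Set.mem_prod, mem_coe, mem_subfieldE] at hp hq h
    ext
    · rw [← polarB_right_coord hB hp.1 hp.2, h, polarB_right_coord hB hq.1 hq.2]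
    · rw [← polarB_left_coord hB hp.1 hp.2, h, polarB_left_coord hB hq.1 hq.2]
  obtain ⟨p, hp, rfl⟩ := surjOn_of_injOn_of_card_le _ hmaps hinj
    (by rw [card_product, card_subfieldE hF, card_hyperplane hF hx, ← pow_add, two_mul]) hu
  simp only [coe_product, Set.mem_prod, mem_coe, mem_subfieldE] at hp
  exact ⟨p.1, p.2, hp.1, hp.2, rfl⟩

lemma hypZeros_eq_union (hF : Fintype.card F = 2 ^ (3 * s)) {x θ θ' : F} (hx : x ≠ 0)
    (hθ : θ ∈ hypZeros s x) (hθ' : θ' ∈ hypZeros s x) (hB : polarB s θ θ' = 1) :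
    hypZeros s x = ((subfieldE s F).erase 0).image (· * θ) ∪
      ((subfieldE s F).erase 0).image (· * θ') := by
  rw [mem_hypZeros] at hθ hθ'
  ext u
  simp only [mem_hypZeros, mem_union, mem_image, mem_erase, mem_subfieldE]
  constructor
  · rintro ⟨⟨hu0, hQu⟩, hxu⟩
    obtain ⟨a, b, ha, hb, rfl⟩ := exists_eq_add_of_polarB_eq_one hF hx (mem_hyperplane.2 hθ.2)
      (mem_hyperplane.2 hθ'.2) hB (mem_hyperplane.2 hxu)
    rw [quadQ_coord hB ha hb hθ.1.2 hθ'.1.2] at hQu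
    rcases mul_eq_zero.1 hQu with rfl | rfl
    · exact Or.inr ⟨b, ⟨fun hb0 => hu0 (by simp [hb0]), hb⟩, by simp⟩
    · exact Or.inl ⟨a, ⟨fun ha0 => hu0 (by simp [ha0]), ha⟩, by simp⟩
  · rintro (⟨a, ⟨ha0, ha⟩, rfl⟩ | ⟨a, ⟨ha0, ha⟩, rfl⟩) <;>
      simp [quadQ_smul ha, mul_left_comm x a, trFE_mul_of_frob_eq ha, *]

lemma card_hypZeros_of_trFE_ne_zero (hF : Fintype.card F = 2 ^ (3 * s)) {x : F}
    (hx : trFE s x ≠ 0) : #(hypZeros s x) = 0 ∨ #(hypZeros s x) = 2 * (2 ^ s - 1) := by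
  rcases (hypZeros s x).eq_empty_or_nonempty with h | ⟨θ, hθ⟩
  · simp [h]
  obtain ⟨θ', hθ', hB⟩ := exists_hyperbolic_partner hF hx hθ
  have hx0 : x ≠ 0 := by rintro rfl; exact hx trFE_zero
  have hne {v : F} (hv : v ∈ hypZeros s x) : v ≠ 0 := (mem_hypZeros.1 hv).1.1
  right
  rw [hypZeros_eq_union hF hx0 hθ hθ' hB, card_union_of_disjoint, card_image_of_injective _
    (mul_left_injective₀ (hne hθ)), card_image_of_injective _ (mul_left_injective₀ (hne hθ')),
    card_erase_of_mem (by simp [mem_subfieldE]), card_subfieldE hF, two_mul]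
  simp only [disjoint_left, mem_image, mem_erase, mem_subfieldE]
  rintro _ ⟨a, ⟨ha0, ha⟩, rfl⟩ ⟨b, ⟨hb0, hb⟩, h⟩
  have := polarB_left_coord hB (map_zero σ) hb
  rw [zero_mul, zero_add, h, polarB_smul_right ha, polarB_self, mul_zero] at this
  exact hb0 this.symm

/-! ### The classes `R_k` -/

lemma card_hypZeros_eq (hF : Fintype.card F = 2 ^ (3 * s)) (x : F) :
    #(hypZeros s x) = ![2 ^ (2 * s) - 1, 2 ^ s - 1, 2 * (2 ^ s - 1), 0] (classOf s x) := by
  have hq := two_le_two_pow_of_card_eq hF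
  unfold classOf
  split_ifs with h0 h1 h2
  · simp [h0, hypZeros_zero, card_quadZeros hF]
  · simpa using h1
  · simpa using h2
  · rcases eq_or_ne (trFE s x) 0 with ht | ht
    · exact absurd (card_hypZeros_of_trFE_eq_zero hF h0 ht) h1
    · simpa [h2] using card_hypZeros_of_trFE_ne_zero hF ht

lemma classOf_eq_iff_card (hF : Fintype.card F = 2 ^ (3 * s)) {x : F} (hx : x ≠ 0) {k : Fin 4}
    (hk : k ≠ 0) :
    classOf s x = k ↔ #(hypZeros s x) = ![2 ^ (2 * s) - 1, 2 ^ s - 1, 2 * (2 ^ s - 1), 0] k := by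
  have hq := two_le_two_pow_of_card_eq hF
  rw [card_hypZeros_eq hF]
  have hx' : classOf s x ≠ 0 := by rwa [ne_eq, classOf_eq_zero_iff]
  generalize classOf s x = j at hx' ⊢
  fin_cases j <;> fin_cases k <;> simp_all <;> omega

lemma classOf_eq_one_iff (hF : Fintype.card F = 2 ^ (3 * s)) {x : F} (hx : x ≠ 0) :
    classOf s x = 1 ↔ trFE s x = 0 := by
  have hq := two_le_two_pow_of_card_eq hF
  rw [classOf_eq_iff_card hF hx one_ne_zero]
  refine ⟨fun h => by_contra fun ht => ?_, card_hypZeros_of_trFE_eq_zero hF hx⟩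
  rcases card_hypZeros_of_trFE_ne_zero hF ht with h' | h' <;> simp [h'] at h <;> omega

lemma trFE_eq_zero_iff_of_classOf_eq (hF : Fintype.card F = 2 ^ (3 * s)) {d d' : F}
    (h : classOf s d = classOf s d') : trFE s d = 0 ↔ trFE s d' = 0 := by
  rcases eq_or_ne d 0 with rfl | hd
  · rw [classOf_eq_zero_iff.2 rfl, eq_comm, classOf_eq_zero_iff] at h
    simp [h, trFE_zero]
  have hd' : d' ≠ 0 := by rwa [ne_eq, ← classOf_eq_zero_iff, ← h, classOf_eq_zero_iff]
  rw [← classOf_eq_one_iff hF hd, ← classOf_eq_one_iff hF hd', h]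

lemma assocClass_one (hF : Fintype.card F = 2 ^ (3 * s)) :
    assocClass s F 1 = (hyperplane s 1).erase 0 := by
  ext x
  rcases eq_or_ne x 0 with rfl | hx
  · simp [assocClass, classOf_eq_zero_iff.2 rfl]
  · simp [assocClass, classOf_eq_one_iff hF hx, mem_hyperplane, hx]

/-! ### Character sums over the classes -/

lemma quadZeros_smul_mem {a u : F} (ha : σ a = a) (ha0 : a ≠ 0) (hu : u ∈ quadZeros s F) :
    a * u ∈ quadZeros s F := by
  rw [mem_quadZeros] at hu ⊢
  exact ⟨mul_ne_zero ha0 hu.1, by rw [quadQ_smul ha, hu.2, mul_zero]⟩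

lemma psiSum_quadZeros_smul {a : F} (ha : σ a = a) (ha0 : a ≠ 0) (x : F) :
    psiSum F (x * a) (quadZeros s F) = psiSum F x (quadZeros s F) := by
  have ha' : σ a⁻¹ = a⁻¹ := by rw [map_inv₀, ha]
  simp only [psiSum_coe]
  refine sum_nbij' (a * ·) (a⁻¹ * ·) (fun u hu => quadZeros_smul_mem ha ha0 hu)
    (fun u hu => quadZeros_smul_mem ha' (inv_ne_zero ha0) hu) (fun u _ => by simp [ha0])
    (fun u _ => by simp [ha0]) (fun u _ => by simp only [mul_assoc])

lemma card_mul_hypZeros (hF : Fintype.card F = 2 ^ (3 * s)) (x : F) :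
    (2 ^ s : ℤ) * #(hypZeros s x) =
      (2 ^ (2 * s) - 1) + (2 ^ s - 1) * psiSum F x (quadZeros s F) := by
  have h1 : (2 ^ s : ℤ) * #(hypZeros s x) =
      ∑ a ∈ subfieldE s F, psiSum F (x * a) (quadZeros s F) := by
    simp only [psiSum_coe, hypZeros, card_filter, Nat.cast_sum, mul_sum]
    rw [sum_comm]
    refine sum_congr rfl fun u _ => ?_
    simp only [mul_right_comm x _ u, sum_subfieldE_psiChar hF]
    split_ifs <;> simp
  have h0 : (0 : F) ∈ subfieldE s F := by simp [mem_subfieldE]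
  rw [h1, ← add_sum_erase _ _ h0, sum_congr rfl fun a ha => psiSum_quadZeros_smul
    (mem_subfieldE.1 (mem_of_mem_erase ha)) (ne_of_mem_erase ha) x, sum_const,
    card_erase_of_mem h0, card_subfieldE hF, mul_zero, psiSum_coe]
  simp only [zero_mul, AddChar.map_zero_eq_one, sum_const, card_quadZeros hF, nsmul_eq_mul,
    mul_one]
  push_cast [Nat.one_le_two_pow]
  ring

lemma psiSum_quadZeros_eq (hF : Fintype.card F = 2 ^ (3 * s)) (x : F) :
    psiSum F x (quadZeros s F) =
      ![2 ^ (2 * s) - 1, -1, 2 ^ s - 1, -(2 ^ s + 1)] (classOf s x) := by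
  have hq : (2 : ℤ) ≤ 2 ^ s := by exact_mod_cast two_le_two_pow_of_card_eq hF
  have hv : (#(hypZeros s x) : ℤ) =
      ![(2 : ℤ) ^ (2 * s) - 1, 2 ^ s - 1, 2 * (2 ^ s - 1), 0] (classOf s x) := by
    rw [card_hypZeros_eq hF x]
    generalize classOf s x = k
    fin_cases k <;> simp [Nat.one_le_two_pow]
  have h := card_mul_hypZeros hF x
  rw [hv, pow_mul'] at h
  refine mul_left_cancel₀ (by omega : (2 : ℤ) ^ s - 1 ≠ 0) ?_
  rw [pow_mul']
  generalize classOf s x = k at h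
  fin_cases k <;> simp only [Fin.zero_eta, Fin.mk_one, Fin.reduceFinMk, Matrix.cons_val] at h ⊢ <;>
    linear_combination -h

lemma sum_mul_classOf (c : F) (g : Fin 4 → ℤ) :
    ∑ x, psiChar F (c * x) * g (classOf s x) = ∑ k, g k * psiSum F c (assocClass s F k) := by
  rw [← sum_fiberwise univ (classOf s)]
  refine sum_congr rfl fun k _ => ?_
  rw [psiSum_coe, assocClass, mul_sum]
  exact sum_congr rfl fun x hx => by rw [(mem_filter.1 hx).2, mul_comm]

lemma sum_psiSum_assocClass (c : F) :
    ∑ k, psiSum F c (assocClass s F k) = if c = 0 then (Fintype.card F : ℤ) else 0 := by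
  have := sum_mul_classOf (s := s) c 1
  simp only [Pi.one_apply, mul_one, one_mul] at this
  rw [← this, ← sum_psiChar_mul c]
  simp_rw [mul_comm]

lemma sum_mul_psiSum_assocClass (hF : Fintype.card F = 2 ^ (3 * s)) (c : F) :
    ∑ k, ![2 ^ (2 * s) - 1, -1, 2 ^ s - 1, -(2 ^ s + 1)] k * psiSum F c (assocClass s F k) =
      if c ∈ quadZeros s F then (Fintype.card F : ℤ) else 0 := by
  rw [← sum_mul_classOf]
  simp_rw [← psiSum_quadZeros_eq hF]
  calc ∑ x, psiChar F (c * x) * psiSum F x (quadZeros s F)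
      = ∑ x, ∑ u ∈ quadZeros s F, psiChar F (x * (c + u)) :=
        sum_congr rfl fun x _ => by
          rw [psiSum_coe, mul_sum]
          exact sum_congr rfl fun u _ => by rw [← AddChar.map_add_eq_mul]; ring_nf
    _ = _ := by
        rw [sum_comm]
        simp only [sum_psiChar_mul, CharTwo.add_eq_zero, sum_ite_eq]

lemma psiSum_assocClass_zero (c : F) : psiSum F c (assocClass s F 0) = 1 := by
  rw [assocClass_zero, psiSum_coe]; simp

lemma psiSum_assocClass_one (hF : Fintype.card F = 2 ^ (3 * s)) (c : F) :
    psiSum F c (assocClass s F 1) = (if c ∈ subfieldE s F then 2 ^ (2 * s) else 0) - 1 := by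
  rw [assocClass_one hF, psiSum_coe, ← sum_hyperplane_one_psiChar hF,
    ← add_sum_erase _ _ (show (0 : F) ∈ hyperplane s 1 by simp [mem_hyperplane, trFE_zero])]
  simp

lemma mem_subfieldE_iff_dualClassOf {c : F} :
    c ∈ subfieldE s F ↔ dualClassOf s c = 0 ∨ dualClassOf s c = 1 := by
  unfold dualClassOf; split_ifs <;> simp_all [mem_subfieldE]

lemma mem_quadZeros_iff_dualClassOf {c : F} : c ∈ quadZeros s F ↔ dualClassOf s c = 2 := by
  unfold dualClassOf
  split_ifs with h0 hE hQ <;> simp [mem_quadZeros, *]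
  rw [quadQ_of_frob_eq (mem_subfieldE.1 hE)]
  exact pow_ne_zero 2 h0

lemma dualClassOf_eq_one_iff {c : F} :
    dualClassOf s c = 1 ↔ c ∈ (subfieldE s F).erase 0 := by
  rw [mem_erase, mem_subfieldE_iff_dualClassOf, ne_eq, ← dualClassOf_eq_zero_iff]
  generalize dualClassOf s c = j
  fin_cases j <;> simp

lemma psiSum_assocClass_eq_of_dualClassOf_eq (hF : Fintype.card F = 2 ^ (3 * s)) (k : Fin 4)
    {c c' : F} (h : dualClassOf s c = dualClassOf s c') :
    psiSum F c (assocClass s F k) = psiSum F c' (assocClass s F k) := by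
  have h0 : c = 0 ↔ c' = 0 := by rw [← dualClassOf_eq_zero_iff, h, dualClassOf_eq_zero_iff]
  have hE : c ∈ subfieldE s F ↔ c' ∈ subfieldE s F := by
    rw [mem_subfieldE_iff_dualClassOf, h, ← mem_subfieldE_iff_dualClassOf]
  have hZ : c ∈ quadZeros s F ↔ c' ∈ quadZeros s F := by
    rw [mem_quadZeros_iff_dualClassOf, h, ← mem_quadZeros_iff_dualClassOf]
  have hP0 : psiSum F c (assocClass s F 0) = psiSum F c' (assocClass s F 0) := by
    rw [psiSum_assocClass_zero, psiSum_assocClass_zero]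
  have hP1 : psiSum F c (assocClass s F 1) = psiSum F c' (assocClass s F 1) := by
    rw [psiSum_assocClass_one hF, psiSum_assocClass_one hF, if_congr hE rfl rfl]
  have hA := (sum_psiSum_assocClass (s := s) c).trans
    ((if_congr h0 rfl rfl).trans (sum_psiSum_assocClass (s := s) c').symm)
  have hB := (sum_mul_psiSum_assocClass hF c).trans
    ((if_congr hZ rfl rfl).trans (sum_mul_psiSum_assocClass hF c').symm)
  simp only [Fin.sum_univ_four, Matrix.cons_val, pow_mul'] at hA hB
  have hq : (2 : ℤ) * 2 ^ s ≠ 0 := by positivity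
  fin_cases k
  · exact hP0
  · exact hP1
  · show psiSum F c (assocClass s F 2) = psiSum F c' (assocClass s F 2)
    refine mul_left_cancel₀ hq ?_
    linear_combination hB + (2 ^ s + 1) * hA - ((2 ^ s) ^ 2 + 2 ^ s) * hP0 - 2 ^ s * hP1
  · show psiSum F c (assocClass s F 3) = psiSum F c' (assocClass s F 3)
    refine mul_left_cancel₀ hq ?_
    linear_combination (2 ^ s - 1) * hA - hB - (2 ^ s - (2 ^ s) ^ 2) * hP0 - 2 ^ s * hP1

lemma sum_dualClassOf_fiber_eq (hF : Fintype.card F = 2 ^ (3 * s)) {d d' : F}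
    (h : classOf s d = classOf s d') (j : Fin 4) :
    ∑ c with dualClassOf s c = j, psiChar F (c * d) =
      ∑ c with dualClassOf s c = j, psiChar F (c * d') := by
  set f : F → Fin 4 → ℤ := fun e j => ∑ c with dualClassOf s c = j, psiChar F (c * e)
  have h0 : f d 0 = f d' 0 := by
    simp only [f, dualClassOf_eq_zero_iff, sum_filter, sum_ite_eq', mem_univ, if_true, zero_mul]
  have h1 : f d 1 = f d' 1 := by
    have hE : (0 : F) ∈ subfieldE s F := by simp [mem_subfieldE]
    simp only [f, dualClassOf_eq_one_iff, filter_mem_eq_inter, univ_inter,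
      sum_erase_eq_sub hE, mul_comm _ d, mul_comm _ d', sum_subfieldE_psiChar hF,
      if_congr (trFE_eq_zero_iff_of_classOf_eq hF h) rfl rfl, mul_zero]
  have h2 : f d 2 = f d' 2 := by
    simp only [f, ← mem_quadZeros_iff_dualClassOf, filter_mem_eq_inter, univ_inter,
      mul_comm _ d, mul_comm _ d', ← psiSum_coe, psiSum_quadZeros_eq hF, h]
  have htot : ∑ j, f d j = ∑ j, f d' j := by
    have hd0 : d = 0 ↔ d' = 0 := by rw [← classOf_eq_zero_iff, h, classOf_eq_zero_iff]
    simp only [f, sum_fiberwise, sum_psiChar_mul, if_congr hd0 rfl rfl]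
  simp only [Fin.sum_univ_four] at htot
  fin_cases j
  · exact h0
  · exact h1
  · exact h2
  · show f d 3 = f d' 3
    linarith

lemma card_translate_assocClass_eq (hF : Fintype.card F = 2 ^ (3 * s)) (k l : Fin 4) {d d' : F}
    (h : classOf s d = classOf s d') :
    #{z ∈ assocClass s F k | d + z ∈ assocClass s F l} =
      #{z ∈ assocClass s F k | d' + z ∈ assocClass s F l} :=
  card_translate_eq_of_invariant (dualClassOf s)
    (fun _ _ hc => psiSum_assocClass_eq_of_dualClassOf_eq hF k hc)
    (fun _ _ hc => psiSum_assocClass_eq_of_dualClassOf_eq hF l hc)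
    (sum_dualClassOf_fiber_eq hF h)

/-! ### The cyclotomic description of the classes -/

lemma hypZeros_smul {a : F} (ha : σ a = a) (ha0 : a ≠ 0) (x : F) :
    hypZeros s (a * x) = hypZeros s x := by
  ext u
  simp [mem_hypZeros, mul_assoc, trFE_mul_of_frob_eq ha, ha0]

lemma frob_pow_Mof (hF : Fintype.card F = 2 ^ (3 * s)) (ω : F) :
    σ (ω ^ Mof s) = ω ^ Mof s := by
  rcases eq_or_ne ω 0 with rfl | hω
  · simp
  have h : (2 ^ s - 1) * Mof s = Fintype.card F - 1 := by
    rw [hF, Mof, show 3 * s = s + 2 * s by ring, pow_add]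
    zify [Nat.one_le_two_pow,
      Nat.one_le_two_pow.trans (Nat.le_mul_of_pos_right _ (Nat.two_pow_pos (2 * s)))]
    ring_nf
  have h1 : (ω ^ Mof s) ^ (2 ^ s - 1) = 1 := by
    rw [← pow_mul, mul_comm, h, FiniteField.pow_card_sub_one_eq_one ω hω]
  rw [iterateFrobenius_def, ← Nat.sub_add_cancel Nat.one_le_two_pow, pow_succ, h1, one_mul]

lemma hypZeros_zpow_add_mul (hF : Fintype.card F = 2 ^ (3 * s)) {ω : F} (hω : ω ≠ 0) (i t : ℤ) :
    hypZeros s (ω ^ (i + Mof s * t)) = hypZeros s (ω ^ i) := by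
  have ha : σ ((ω ^ Mof s) ^ t) = (ω ^ Mof s) ^ t := by rw [map_zpow₀, frob_pow_Mof hF]
  rw [zpow_add₀ hω, zpow_mul, zpow_natCast, mul_comm,
    hypZeros_smul ha (zpow_ne_zero _ (pow_ne_zero _ hω))]

lemma mem_Rclass_iff (hF : Fintype.card F = 2 ^ (3 * s)) {ω : F}
    (hω : ∀ x : F, x ≠ 0 → ∃ n : ℕ, x = ω ^ n) (v : ℕ) {x : F} (hx : x ≠ 0) :
    x ∈ Rclass s ω {i | (Sa s ω (i.val : ℤ)).ncard = v} ↔ #(hypZeros s x) = v := by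
  have hω0 := ne_zero_of_forall_eq_pow hF hω
  simp only [Rclass, cyc, Set.mem_iUnion, Set.mem_ofPred_eq, Sa_eq, Set.ncard_coe_finset]
  constructor
  · rintro ⟨i, hi, t, rfl⟩
    rwa [hypZeros_zpow_add_mul hF hω0]
  · intro h
    obtain ⟨n, rfl⟩ := hω x hx
    have hn : ((n : ZMod (Mof s)).val : ℤ) + Mof s * (n / Mof s : ℕ) = n := by
      rw [ZMod.val_natCast]; exact_mod_cast Nat.mod_add_div n (Mof s)
    refine ⟨n, ?_, ((n / Mof s : ℕ) : ℤ), ?_⟩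
    · rwa [← hypZeros_zpow_add_mul hF hω0 _ (n / Mof s : ℕ), hn, zpow_natCast]
    · rw [hn, zpow_natCast]

lemma mem_Rfam_iff (hF : Fintype.card F = 2 ^ (3 * s)) {ω : F}
    (hω : ∀ x : F, x ≠ 0 → ∃ n : ℕ, x = ω ^ n) (k : Fin 4) (x : F) :
    x ∈ Rfam s ω ω k ↔ classOf s x = k := by
  rcases eq_or_ne x 0 with rfl | hx
  · have h0 (T : Set (ZMod (Mof s))) : (0 : F) ∉ Rclass s ω T := fun h => by
      simp only [Rclass, cyc, Set.mem_iUnion, Set.mem_ofPred_eq] at h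
      obtain ⟨i, _, t, ht⟩ := h
      exact zpow_ne_zero _ (ne_zero_of_forall_eq_pow hF hω) ht.symm
    fin_cases k <;> simp [Rfam, classOf_eq_zero_iff.2 rfl, h0]
  rcases eq_or_ne k 0 with rfl | hk
  · simp [Rfam, hx, classOf_eq_zero_iff]
  rw [classOf_eq_iff_card hF hx hk]
  fin_cases k
  · exact absurd rfl hk
  all_goals exact mem_Rclass_iff hF hω _ hx

lemma existsUnique_mem_Rfam (hF : Fintype.card F = 2 ^ (3 * s)) {ω : F}
    (hω : ∀ x : F, x ≠ 0 → ∃ n : ℕ, x = ω ^ n) (x : F) : ∃! k : Fin 4, x ∈ Rfam s ω ω k := by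
  simp only [mem_Rfam_iff hF hω]
  exact ⟨_, rfl, fun k hk => hk.symm⟩

lemma ncard_translate_Rfam_eq (hF : Fintype.card F = 2 ^ (3 * s)) {ω : F}
    (hω : ∀ x : F, x ≠ 0 → ∃ n : ℕ, x = ω ^ n) (k l : Fin 4) {m : Fin 4} {d d' : F}
    (hd : d ∈ Rfam s ω ω m) (hd' : d' ∈ Rfam s ω ω m) :
    {z : F | z ∈ Rfam s ω ω k ∧ d + z ∈ Rfam s ω ω l}.ncard =
      {z : F | z ∈ Rfam s ω ω k ∧ d' + z ∈ Rfam s ω ω l}.ncard := by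
  have hset (e : F) : {z : F | z ∈ Rfam s ω ω k ∧ e + z ∈ Rfam s ω ω l} =
      ↑({z ∈ assocClass s F k | e + z ∈ assocClass s F l} : Finset F) := by
    ext z; simp [mem_Rfam_iff hF hω, assocClass]
  rw [mem_Rfam_iff hF hω] at hd hd'
  rw [hset, hset, Set.ncard_coe_finset, Set.ncard_coe_finset]
  exact card_translate_assocClass_eq hF k l (hd.trans hd'.symm)

end ConicScheme

theorem statement12_general (s : ℕ) (F : Type*) [Field F] [Fintype F]
    (hF : Fintype.card F = 2 ^ (3 * s)) (ω : F)
    (hω : ∀ x : F, x ≠ 0 → ∃ n : ℕ, x = ω ^ n) :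
    (∀ x : F, ∃! k : Fin 4, x ∈ Rfam s ω ω k) ∧
    ∃ p : Fin 4 → Fin 4 → Fin 4 → ℕ,
      ∀ k l m : Fin 4, ∀ d ∈ Rfam s ω ω m,
        {z : F | z ∈ Rfam s ω ω k ∧ d + z ∈ Rfam s ω ω l}.ncard = p k l m := by
  have : CharP F 2 := charP_of_card_eq_prime_pow hF
  refine ⟨ConicScheme.existsUnique_mem_Rfam hF hω, fun k l m =>
    if h : (Rfam s ω ω m).Nonempty then
      {z : F | z ∈ Rfam s ω ω k ∧ h.some + z ∈ Rfam s ω ω l}.ncard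
    else 0, fun k l m d hd => ?_⟩
  dsimp only
  rw [dif_pos ⟨d, hd⟩]
  exact ConicScheme.ncard_translate_Rfam_eq hF hω k l hd (Set.Nonempty.some_mem _)

theorem statement12 (s : ℕ) (hs : 1 ≤ s) (F : Type*) [Field F] [Fintype F]
    (hF : Fintype.card F = 2 ^ (3 * s)) (ω : F)
    (hω : ∀ x : F, x ≠ 0 → ∃ n : ℕ, x = ω ^ n) :
    (∀ x : F, ∃! k : Fin 4, x ∈ Rfam s ω ω k) ∧
    ∃ p : Fin 4 → Fin 4 → Fin 4 → ℕ,
      ∀ k l m : Fin 4, ∀ d ∈ Rfam s ω ω m,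
        {z : F | z ∈ Rfam s ω ω k ∧ d + z ∈ Rfam s ω ω l}.ncard = p k l m :=
  statement12_general s F hF ω hω
end
end
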